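/- arXiv:2507.13840 — 12 statements merged into one kernel-verified Lean document; each statement's English description precedes it below -/
import Mathlib

section
/- Let a, b ≥ 1 and let ρ be a density matrix on ℂ^(Fin a × Fin b). Let λ : Fin (a*b) → ℝ be the eigenvalues (with multiplicity) of the Hermitian matrix ρ^Γ. Then (∑ i, (λ i)^2)^3 ≤ (∑ i, (λ i)^4) · (∑ i, |λ i|)^2; equivalently, the p₄-negativity E₄(ρ) = (1/2)·ln(p₂³/p₄) is a lower bound on the PT negativity E(ρ) = ln ∑ i, |λ i|. -/
open Matrix BigOperators ComplexOrder

/-- Partial transpose on the second tensor factor: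
`ρ^Γ ((i,j),(k,l)) = ρ ((i,l),(k,j))`. -/
def PT {α β : Type*} (ρ : Matrix (α × β) (α × β) ℂ) : Matrix (α × β) (α × β) ℂ :=
  fun x y => ρ (x.1, y.2) (y.1, x.2)

/-- For a density matrix `ρ` with PT eigenvalues `λ`, one has `p₂³ ≤ p₄ · (∑|λ|)²`,
i.e. the p₄-negativity `E₄(ρ) = ½ ln(p₂³/p₄)` lower bounds the PT negativity
`E(ρ) = ln ∑ᵢ |λ i|`. -/
theorem p4_negativity_le_PT_negativity {a b : ℕ} (ha : 1 ≤ a) (hb : 1 ≤ b)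
    (ρ : Matrix (Fin a × Fin b) (Fin a × Fin b) ℂ)
    (hρ : ρ.PosSemidef) (htr : ρ.trace = 1)
    (hΓ : (PT ρ).IsHermitian)
    (lam : Fin (a * b) → ℝ)
    (hlam : lam = hΓ.eigenvalues ∘ ⇑finProdFinEquiv.symm) :
    (∑ i, (lam i) ^ 2) ^ 3 ≤ (∑ i, (lam i) ^ 4) * (∑ i, |lam i|) ^ 2 := by
  clear hlam
  set S2 := ∑ i, (lam i) ^ 2 with hS2
  set S4 := ∑ i, (lam i) ^ 4 with hS4
  set S1 := ∑ i, |lam i| with hS1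
  set S3 := ∑ i, |lam i| ^ 3 with hS3
  have hS2nn : 0 ≤ S2 := Finset.sum_nonneg fun i _ => sq_nonneg _
  have hS4nn : 0 ≤ S4 := Finset.sum_nonneg fun i _ => by positivity
  have hS1nn : 0 ≤ S1 := Finset.sum_nonneg fun i _ => abs_nonneg _
  -- CS 1: S2² ≤ S3 * S1
  have cs1 : S2 ^ 2 ≤ S3 * S1 := by
    have h := Finset.sum_mul_sq_le_sq_mul_sq Finset.univ
      (fun i => |lam i| * Real.sqrt |lam i|) (fun i => Real.sqrt |lam i|)
    calc S2 ^ 2 = (∑ i, (|lam i| * Real.sqrt |lam i|) * Real.sqrt |lam i|) ^ 2 := by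
          congr 1
          refine Finset.sum_congr rfl fun i _ => ?_
          rw [mul_assoc, Real.mul_self_sqrt (abs_nonneg _), ← sq_abs, sq]
      _ ≤ (∑ i, (|lam i| * Real.sqrt |lam i|) ^ 2) * ∑ i, Real.sqrt |lam i| ^ 2 := h
      _ = S3 * S1 := by
          congr 1 <;> refine Finset.sum_congr rfl fun i _ => ?_
          · rw [mul_pow, Real.sq_sqrt (abs_nonneg _)]; ring
          · exact Real.sq_sqrt (abs_nonneg _)
  -- CS 2: S3² ≤ S4 * S2
  have cs2 : S3 ^ 2 ≤ S4 * S2 := by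
    have h := Finset.sum_mul_sq_le_sq_mul_sq Finset.univ
      (fun i => (lam i) ^ 2) (fun i => |lam i|)
    calc S3 ^ 2 = (∑ i, (lam i) ^ 2 * |lam i|) ^ 2 := by
          congr 1
          exact Finset.sum_congr rfl fun i _ => by rw [← sq_abs]; ring
      _ ≤ (∑ i, ((lam i) ^ 2) ^ 2) * ∑ i, |lam i| ^ 2 := h
      _ = S4 * S2 := by
          congr 1 <;> refine Finset.sum_congr rfl fun i _ => ?_
          · ring
          · rw [sq_abs]
  rcases eq_or_lt_of_le hS2nn with h0 | hpos
  · rw [← h0]; simpa using mul_nonneg hS4nn (sq_nonneg S1)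
  · have key : S2 ^ 4 ≤ S4 * S2 * S1 ^ 2 := by
      calc S2 ^ 4 = (S2 ^ 2) ^ 2 := by ring
        _ ≤ (S3 * S1) ^ 2 := by
            apply pow_le_pow_left₀ (sq_nonneg _) cs1
        _ = S3 ^ 2 * S1 ^ 2 := by ring
        _ ≤ S4 * S2 * S1 ^ 2 := by
            exact mul_le_mul_of_nonneg_right cs2 (sq_nonneg _)
    have := (mul_le_mul_iff_left₀ hpos).mp (by nlinarith : S2 ^ 3 * S2 ≤ S4 * S1 ^ 2 * S2)
    exact this
end

section
/- Let a, b ≥ 1 and let ρ be a density matrix on ℂ^(Fin a × Fin b), with λ : Fin (a*b) → ℝ the eigenvalues of ρ^Γ. For a real number γ with γ > 0 and γ ≠ 2, define E_γ(ρ) = (1/(2−γ))·ln(∑ i, |λ i|^γ) + ((1−γ)/(2−γ))·ln(∑ i, (λ i)^2), where powers of nonnegative reals are real powers. Then for all real α, β with 0 < α < β, α ≠ 2 and β ≠ 2, one has E_β(ρ) ≤ E_α(ρ) (the p_α-negativity is monotonically non-increasing in α). -/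
open Matrix BigOperators ComplexOrder

/-- log-sum-exp is convex -/
lemma lse_convex {ι : Type*} (s : Finset ι) (hs : s.Nonempty) (c : ι → ℝ) :
    ConvexOn ℝ Set.univ (fun γ : ℝ => Real.log (∑ i ∈ s, Real.exp (γ * c i))) := by
  have hpos : ∀ γ : ℝ, 0 < ∑ i ∈ s, Real.exp (γ * c i) := fun γ =>
    Finset.sum_pos (fun i _ => Real.exp_pos _) hs
  have hrpow : ∀ (z w : ℝ), Real.exp z ^ w = Real.exp (z * w) := by
    intro z w
    rw [Real.rpow_def_of_pos (Real.exp_pos _), Real.log_exp]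
  refine ⟨convex_univ, ?_⟩
  intro x _ y _ t u ht hu htu
  rcases eq_or_lt_of_le ht with h0 | ht
  · have : u = 1 := by linarith
    simp [← h0, this]
  rcases eq_or_lt_of_le hu with h0 | hu
  · have : t = 1 := by linarith
    simp [← h0, this]
  have ht1 : t < 1 := by linarith
  have hpq : Real.HolderConjugate (1/t) (1/u) := by
    rw [Real.holderConjugate_iff]
    constructor
    · rw [lt_div_iff₀ ht]; linarith
    · simp only [one_div, inv_inv]; exact htu
  have hold := Real.inner_le_Lp_mul_Lq_of_nonneg s hpq
    (f := fun i => Real.exp (x * c i) ^ t) (g := fun i => Real.exp (y * c i) ^ u)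
    (fun i _ => Real.rpow_nonneg (Real.exp_pos _).le _)
    (fun i _ => Real.rpow_nonneg (Real.exp_pos _).le _)
  simp only [hrpow, ← Real.exp_add] at hold
  have key : ∑ i ∈ s, Real.exp ((t * x + u * y) * c i)
      ≤ (∑ i ∈ s, Real.exp (x * c i)) ^ t * (∑ i ∈ s, Real.exp (y * c i)) ^ u := by
    calc ∑ i ∈ s, Real.exp ((t * x + u * y) * c i)
        = ∑ i ∈ s, Real.exp (x * c i * t + y * c i * u) := by
          apply Finset.sum_congr rfl; intro i _; ring_nf
      _ ≤ (∑ i ∈ s, Real.exp (x * c i * t * (1/t))) ^ (1/(1/t))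
            * (∑ i ∈ s, Real.exp (y * c i * u * (1/u))) ^ (1/(1/u)) := hold
      _ = (∑ i ∈ s, Real.exp (x * c i)) ^ t * (∑ i ∈ s, Real.exp (y * c i)) ^ u := by
          rw [one_div_one_div, one_div_one_div]
          congr 2 <;> (apply Finset.sum_congr rfl; intro i _; congr 1; field_simp)
  calc Real.log (∑ i ∈ s, Real.exp ((t * x + u * y) * c i))
      ≤ Real.log ((∑ i ∈ s, Real.exp (x * c i)) ^ t * (∑ i ∈ s, Real.exp (y * c i)) ^ u) :=
        Real.log_le_log (hpos _) key
    _ = t * Real.log (∑ i ∈ s, Real.exp (x * c i)) + u * Real.log (∑ i ∈ s, Real.exp (y * c i)) := by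
        rw [Real.log_mul (Real.rpow_pos_of_pos (hpos _) _).ne' (Real.rpow_pos_of_pos (hpos _) _).ne',
          Real.log_rpow (hpos _), Real.log_rpow (hpos _)]

/-- The p_α-negativity
`E_γ(ρ) = (1/(2−γ))·ln(∑ᵢ |λ i|^γ) + ((1−γ)/(2−γ))·ln(∑ᵢ (λ i)²)`
is monotonically non-increasing in the index: for `0 < α < β` (both `≠ 2`),
`E_β(ρ) ≤ E_α(ρ)`. -/
theorem p_alpha_negativity_antitone {a b : ℕ} (ha : 1 ≤ a) (hb : 1 ≤ b)
    (ρ : Matrix (Fin a × Fin b) (Fin a × Fin b) ℂ)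
    (hρ : ρ.PosSemidef) (htr : ρ.trace = 1)
    (hΓ : (PT ρ).IsHermitian)
    (lam : Fin (a * b) → ℝ)
    (hlam : lam = hΓ.eigenvalues ∘ ⇑finProdFinEquiv.symm)
    (E : ℝ → ℝ)
    (hE : ∀ γ : ℝ, E γ = (1 / (2 - γ)) * Real.log (∑ i, |lam i| ^ γ)
        + ((1 - γ) / (2 - γ)) * Real.log (∑ i, (lam i) ^ 2)) :
    ∀ α β : ℝ, 0 < α → α < β → α ≠ 2 → β ≠ 2 → E β ≤ E α := by
  intro α β hα hab hα2 hβ2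
  -- sum of eigenvalues is 1
  have heig : ∑ p, (hΓ.eigenvalues p : ℝ) = 1 := by
    have h1 : (PT ρ).trace = ρ.trace := by
      simp [Matrix.trace, Matrix.diag, PT]
    have h2 : (PT ρ).trace = ∑ p, (hΓ.eigenvalues p : ℂ) := by
      conv_lhs => rw [hΓ.spectral_theorem]
      rw [Unitary.conjStarAlgAut_apply, Matrix.trace_mul_comm, ← mul_assoc,
        (Matrix.mem_unitaryGroup_iff').mp (Matrix.IsHermitian.eigenvectorUnitary hΓ).2, one_mul,
        Matrix.trace_diagonal]
      rfl
    have : ((∑ p, (hΓ.eigenvalues p : ℝ) : ℝ) : ℂ) = 1 := by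
      push_cast
      rw [← h2, h1, htr]
    exact_mod_cast this
  have hsum : ∑ i, lam i = 1 := by
    rw [hlam]
    exact (Equiv.sum_comp finProdFinEquiv.symm hΓ.eigenvalues).trans heig
  -- the set of indices with nonzero eigenvalue
  set s : Finset (Fin (a * b)) := Finset.univ.filter (fun i => lam i ≠ 0) with hs
  have hsne : s.Nonempty := by
    by_contra h
    rw [Finset.not_nonempty_iff_eq_empty] at h
    have : ∑ i, lam i = 0 := by
      apply Finset.sum_eq_zero
      intro i _
      by_contra hi
      have : i ∈ s := by simp [hs, hi]
      simp [h] at this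
    rw [hsum] at this; norm_num at this
  set c : Fin (a * b) → ℝ := fun i => Real.log |lam i| with hc
  set F : ℝ → ℝ := fun γ : ℝ => Real.log (∑ i ∈ s, Real.exp (γ * c i)) with hFdef
  have hconv : ConvexOn ℝ Set.univ F := lse_convex s hsne c
  have hF : ∀ γ : ℝ, γ ≠ 0 → Real.log (∑ i, |lam i| ^ γ) = F γ := by
    intro γ hγ
    have : ∑ i, |lam i| ^ γ = ∑ i ∈ s, Real.exp (γ * c i) := by
      rw [← Finset.sum_filter_of_ne (p := fun i => lam i ≠ 0)
        (by intro i _ hne h0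
            rw [h0, abs_zero, Real.zero_rpow hγ] at hne
            exact hne rfl)]
      apply Finset.sum_congr rfl
      intro i hi
      have hi' : lam i ≠ 0 := by simpa [hs] using hi
      rw [Real.rpow_def_of_pos (abs_pos.mpr hi'), hc, mul_comm]
    rw [this]
  have h2F : Real.log (∑ i, (lam i) ^ 2) = F 2 := by
    have : ∑ i, (lam i) ^ 2 = ∑ i, |lam i| ^ (2 : ℝ) := by
      apply Finset.sum_congr rfl
      intro i _
      rw [show ((2:ℝ)) = ((2:ℕ) : ℝ) by norm_num, Real.rpow_natCast, sq_abs]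
    rw [this, hF 2 two_ne_zero]
  have hEeq : ∀ γ : ℝ, γ ≠ 2 → γ ≠ 0 → E γ = F 2 - (F γ - F 2) / (γ - 2) := by
    intro γ hγ2 hγ0
    rw [hE, hF γ hγ0, h2F]
    have h1 : γ - 2 ≠ 0 := sub_ne_zero.mpr hγ2
    have h2 : (2:ℝ) - γ ≠ 0 := by intro h; apply h1; linarith
    field_simp
    ring
  have hsec := hconv.secant_mono (a := 2) (x := α) (y := β)
    (Set.mem_univ _) (Set.mem_univ _) (Set.mem_univ _) hα2 hβ2 hab.le
  rw [hEeq α hα2 hα.ne', hEeq β hβ2 (by linarith)]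
  linarith
end

section
/- Let a, b ≥ 1 and let ρ be a density matrix on ℂ^(Fin a × Fin b), with λ : Fin (a*b) → ℝ the eigenvalues of ρ^Γ, and set p_k = ∑ i, (λ i)^k. Then p₄ ≤ p₂² and p₂² ≤ (a*b)·p₄. Equivalently, the p₄-negativity satisfies −(1/2)·S₂(ρ) ≤ E₄(ρ) ≤ (1/2)·(ln(a*b) − S₂(ρ)), where S₂(ρ) = −ln p₂ and E₄(ρ) = (1/2)·ln(p₂³/p₄). -/
open Matrix BigOperators ComplexOrder

/-- Bounds on the p₄-negativity: `p₄ ≤ p₂²` and `p₂² ≤ (a·b)·p₄`, i.e.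
`−½ S₂(ρ) ≤ E₄(ρ) ≤ ½ (ln(a·b) − S₂(ρ))`. -/
theorem p4_negativity_bounds {a b : ℕ} (ha : 1 ≤ a) (hb : 1 ≤ b)
    (ρ : Matrix (Fin a × Fin b) (Fin a × Fin b) ℂ)
    (hρ : ρ.PosSemidef) (htr : ρ.trace = 1)
    (hΓ : (PT ρ).IsHermitian)
    (lam : Fin (a * b) → ℝ)
    (hlam : lam = hΓ.eigenvalues ∘ ⇑finProdFinEquiv.symm) :
    (∑ i, (lam i) ^ 4) ≤ (∑ i, (lam i) ^ 2) ^ 2 ∧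
      (∑ i, (lam i) ^ 2) ^ 2 ≤ ((a * b : ℕ) : ℝ) * ∑ i, (lam i) ^ 4 := by
  constructor
  · calc ∑ i, (lam i) ^ 4 = ∑ i, (lam i) ^ 2 * (lam i) ^ 2 := by
          apply Finset.sum_congr rfl; intro i _; ring
      _ ≤ ∑ i, (lam i) ^ 2 * ∑ j, (lam j) ^ 2 := by
          apply Finset.sum_le_sum; intro i _
          exact mul_le_mul_of_nonneg_left
            (Finset.single_le_sum (fun j _ => sq_nonneg (lam j)) (Finset.mem_univ i))
            (sq_nonneg _)
      _ = (∑ i, (lam i) ^ 2) ^ 2 := by rw [← Finset.sum_mul]; ring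
  · have h2 := Finset.sum_mul_sq_le_sq_mul_sq (Finset.univ : Finset (Fin (a * b)))
      (fun _ => (1 : ℝ)) (fun i => (lam i) ^ 2)
    simp only [one_mul, one_pow] at h2
    have h3 : (∑ i : Fin (a*b), ((lam i) ^ 2) ^ 2) = ∑ i, (lam i) ^ 4 := by
      apply Finset.sum_congr rfl; intro i _; ring
    rw [h3, Finset.sum_const, Finset.card_univ, Fintype.card_fin, nsmul_eq_mul, mul_one] at h2
    exact h2
end

section
/- Let ρ, σ₊, σ₋ be Hermitian matrices on ℂ^(Fin a × Fin b) and s ≥ 0 a real number with ρ = (1+s)·σ₊ − s·σ₋. Suppose the trace norms of the partial transposes of σ₊ and σ₋ satisfy ∑ i, |eig(σ₊^Γ) i| ≤ 1 and ∑ i, |eig(σ₋^Γ) i| ≤ 1 (as holds when σ₊, σ₋ are separable states). Then ∑ i, |eig(ρ^Γ) i| ≤ 2s + 1, i.e. the PT negativity satisfies E(ρ) ≤ ln(2s+1). This is the inequality E(ρ) ≤ ln(2R(ρ)+1) relating the PT negativity to the robustness of entanglement. -/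
open Matrix BigOperators

section Aux

variable {n : Type*} [Fintype n] [DecidableEq n]

/-- Any entry of a matrix with `star W * W = 1` has modulus at most `1`. -/
lemma unitary_entry_le_one (W : Matrix n n ℂ) (h : star W * W = 1) (i : n) :
    ‖W i i‖ ≤ 1 := by
  have h1 : (star W * W) i i = (1 : Matrix n n ℂ) i i := by rw [h]
  simp [Matrix.mul_apply, Matrix.star_apply, Matrix.one_apply] at h1
  have hsum : ∑ j, Complex.normSq (W j i) = 1 := by
    have := congrArg Complex.re h1
    simpa [Complex.mul_conj', Complex.re_sum, Complex.normSq_apply] using this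
  have h2 : Complex.normSq (W i i) ≤ 1 := by
    rw [← hsum]
    exact Finset.single_le_sum (f := fun j => Complex.normSq (W j i))
      (fun j _ => Complex.normSq_nonneg _) (Finset.mem_univ i)
  rw [Complex.norm_def]
  exact Real.sqrt_le_one.mpr h2

/-- Trace duality bound: for unitary `C` and Hermitian `N`,
`Re tr (C * N) ≤ ∑ |eig N|`. -/
lemma re_trace_le (C N : Matrix n n ℂ) (hN : N.IsHermitian)
    (hC : star C * C = 1) :
    ((C * N).trace).re ≤ ∑ i, |hN.eigenvalues i| := by
  set V : Matrix n n ℂ := (hN.eigenvectorUnitary : Matrix n n ℂ) with hV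
  have hVu : star V * V = 1 := by
    simpa [hV] using (Matrix.mem_unitaryGroup_iff').mp hN.eigenvectorUnitary.2
  have hVu' : V * star V = 1 := by
    simpa [hV] using (Matrix.mem_unitaryGroup_iff).mp hN.eigenvectorUnitary.2
  set W : Matrix n n ℂ := star V * C * V with hW
  have hWu : star W * W = 1 := by
    have hWs : star W = star V * star C * V := by
      rw [hW]; simp only [Matrix.star_mul, star_star]; noncomm_ring
    rw [hWs, hW,
      show star V * star C * V * (star V * C * V)
        = star V * star C * (V * star V) * C * V from by noncomm_ring, hVu', mul_one,
      show star V * star C * C * V = star V * (star C * C) * V from by noncomm_ring,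
      hC, mul_one, hVu]
  set D : Matrix n n ℂ := diagonal ((RCLike.ofReal ∘ hN.eigenvalues : n → ℂ)) with hD
  have key : (C * N).trace = (W * D).trace := by
    conv_lhs => rw [hN.spectral_theorem, Unitary.conjStarAlgAut_apply, ← hV, ← hD]
    rw [show C * (V * D * star V) = (C * V * D) * star V from by noncomm_ring,
      Matrix.trace_mul_comm,
      show star V * (C * V * D) = (star V * C * V) * D from by noncomm_ring, ← hW]
  rw [key]
  have htr : (W * D).trace = ∑ i, W i i * (hN.eigenvalues i : ℂ) := by
    rw [hD]
    simp [Matrix.trace, Matrix.diag, Matrix.mul_apply, Matrix.diagonal_apply]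
  rw [htr, Complex.re_sum]
  apply Finset.sum_le_sum
  intro i _
  have h1 : (W i i * (hN.eigenvalues i : ℂ)).re = (W i i).re * hN.eigenvalues i := by
    simp [Complex.mul_re]
  rw [h1]
  calc (W i i).re * hN.eigenvalues i ≤ |(W i i).re * hN.eigenvalues i| := le_abs_self _
    _ = |(W i i).re| * |hN.eigenvalues i| := abs_mul _ _
    _ ≤ 1 * |hN.eigenvalues i| := by
        apply mul_le_mul_of_nonneg_right _ (abs_nonneg _)
        exact (Complex.abs_re_le_norm _).trans (unitary_entry_le_one W hWu i)
    _ = |hN.eigenvalues i| := one_mul _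

/-- The trace-norm attaining unitary: for Hermitian `M` there is `C` with
`star C * C = 1` and `Re tr (C * M) = ∑ |eig M|`. -/
lemma exists_attain (M : Matrix n n ℂ) (hM : M.IsHermitian) :
    ∃ C : Matrix n n ℂ, star C * C = 1 ∧
      ((C * M).trace).re = ∑ i, |hM.eigenvalues i| := by
  set V : Matrix n n ℂ := (hM.eigenvectorUnitary : Matrix n n ℂ) with hV
  have hVu : star V * V = 1 := by
    simpa [hV] using (Matrix.mem_unitaryGroup_iff').mp hM.eigenvectorUnitary.2
  have hVu' : V * star V = 1 := by
    simpa [hV] using (Matrix.mem_unitaryGroup_iff).mp hM.eigenvectorUnitary.2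
  set sgn : n → ℂ := fun i => if hM.eigenvalues i < 0 then -1 else 1 with hsgn
  set S := diagonal sgn with hS
  have hstar : star sgn = sgn := by
    funext i
    by_cases h : hM.eigenvalues i < 0 <;> simp [hsgn, h]
  have hSs : star S = S := by
    rw [hS, Matrix.star_eq_conjTranspose, Matrix.diagonal_conjTranspose, hstar]
  have hsq : (fun i => sgn i * sgn i) = fun _ => (1 : ℂ) := by
    funext i
    by_cases h : hM.eigenvalues i < 0 <;> simp [hsgn, h]
  have hSS : S * S = 1 := by
    rw [hS, Matrix.diagonal_mul_diagonal, hsq, Matrix.diagonal_one]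
  refine ⟨V * S * star V, ?_, ?_⟩
  · have hCs : star (V * S * star V) = V * S * star V := by
      simp only [Matrix.star_mul, star_star, hSs]; noncomm_ring
    rw [hCs,
      show (V * S * star V) * (V * S * star V)
        = V * S * (star V * V) * S * star V from by noncomm_ring, hVu, mul_one,
      show V * S * S * star V = V * (S * S) * star V from by noncomm_ring,
      hSS, mul_one, hVu']
  · set D : Matrix n n ℂ := diagonal ((RCLike.ofReal ∘ hM.eigenvalues : n → ℂ)) with hD
    have key : ((V * S * star V) * M).trace = (S * D).trace := by
      conv_lhs => rw [hM.spectral_theorem, Unitary.conjStarAlgAut_apply, ← hV, ← hD]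
      rw [show (V * S * star V) * (V * D * star V)
          = V * S * (star V * V) * D * star V from by noncomm_ring, hVu, mul_one,
        show V * S * D * star V = (V * (S * D)) * star V from by noncomm_ring,
        Matrix.trace_mul_comm,
        show star V * (V * (S * D)) = (star V * V) * (S * D) from by noncomm_ring,
        hVu, one_mul]
    rw [key, hS, hD, Matrix.diagonal_mul_diagonal, Matrix.trace_diagonal, Complex.re_sum]
    apply Finset.sum_congr rfl
    intro i _
    by_cases h : hM.eigenvalues i < 0
    · simp [hsgn, h, abs_of_neg h]
    · simp [hsgn, h, abs_of_nonneg (not_lt.mp h)]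

end Aux

/-- If `ρ = (1+s)·σ₊ − s·σ₋` with `s ≥ 0` and the trace norms of the partial
transposes of `σ₊, σ₋` are at most `1`, then `‖ρ^Γ‖₁ ≤ 2s + 1`:
the PT negativity is bounded by `ln(2R(ρ)+1)` where `R` is the robustness of
entanglement. -/
theorem PT_negativity_le_robustness {a b : ℕ}
    (ρ σp σm : Matrix (Fin a × Fin b) (Fin a × Fin b) ℂ)
    (hρ : ρ.IsHermitian) (hσp : σp.IsHermitian) (hσm : σm.IsHermitian)
    (s : ℝ) (hs : 0 ≤ s)
    (hdecomp : ρ = ((1 + s : ℝ) : ℂ) • σp - ((s : ℝ) : ℂ) • σm)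
    (hΓρ : (PT ρ).IsHermitian) (hΓp : (PT σp).IsHermitian) (hΓm : (PT σm).IsHermitian)
    (hp : ∑ i, |hΓp.eigenvalues i| ≤ 1)
    (hm : ∑ i, |hΓm.eigenvalues i| ≤ 1) :
    ∑ i, |hΓρ.eigenvalues i| ≤ 2 * s + 1 := by
  obtain ⟨C, hC, hCtr⟩ := exists_attain (PT ρ) hΓρ
  have hPT : PT ρ = ((1 + s : ℝ) : ℂ) • PT σp - ((s : ℝ) : ℂ) • PT σm := by
    funext x y
    simp [PT, hdecomp, Matrix.sub_apply, Matrix.smul_apply]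
  have htr : (C * PT ρ).trace
      = ((1 + s : ℝ) : ℂ) * (C * PT σp).trace - ((s : ℝ) : ℂ) * (C * PT σm).trace := by
    rw [hPT, Matrix.mul_sub, Matrix.trace_sub, Matrix.mul_smul, Matrix.mul_smul,
      Matrix.trace_smul, Matrix.trace_smul, smul_eq_mul, smul_eq_mul]
  have h1 : ((C * PT σp).trace).re ≤ 1 := (re_trace_le C _ hΓp hC).trans hp
  have h2 : -(((C * PT σm).trace).re) ≤ 1 := by
    have hC' : star (-C) * (-C) = 1 := by simpa using hC
    have := (re_trace_le (-C) _ hΓm hC').trans hm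
    simpa [Matrix.neg_mul] using this
  have hre : ∑ i, |hΓρ.eigenvalues i|
      = (1 + s) * ((C * PT σp).trace).re - s * ((C * PT σm).trace).re := by
    rw [← hCtr, htr]
    simp [Complex.sub_re, Complex.mul_re]
  rw [hre]
  nlinarith [h1, h2, hs]
end

section
/- Let I be a finite index set, λ : I → ℝ, and let (B_q)_{q ∈ Q} be a partition of I into finitely many blocks such that each block B_q contains some i with λ i ≠ 0. Then ∑_{q ∈ Q} √( (∑_{i ∈ B_q} (λ i)^2)^3 / (∑_{i ∈ B_q} (λ i)^4) ) ≤ ∑_{i ∈ I} |λ i|. In particular, when λ lists the eigenvalues of a block-diagonal partial transpose ρ^Γ = ⊕_q ρ^Γ_{(q)} arising from a symmetry, the symmetry-resolved p₄-negativity E₄^{SR}(ρ) = ln ∑_q √((p₂^{(q)})³ / p₄^{(q)}) is a lower bound on the PT negativity E(ρ) = ln ∑_i |λ i|. -/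
open BigOperators

/-- Symmetry-resolved p₄-negativity bound: if `(B_q)_{q ∈ Q}` is a partition of the
finite index set `I` such that every block contains an index with `λ i ≠ 0`, then
`∑_q √((∑_{i∈B_q} λᵢ²)³ / (∑_{i∈B_q} λᵢ⁴)) ≤ ∑_i |λ i|`; i.e. the
symmetry-resolved p₄-negativity `E₄^SR(ρ)` lower bounds the PT negativity `E(ρ)`. -/
theorem sr_p4_negativity_le_PT_negativity {I Q : Type*} [Fintype I] [Fintype Q]
    (lam : I → ℝ) (B : Q → Finset I)
    (hdisj : ∀ q q', q ≠ q' → Disjoint (B q) (B q'))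
    (hcover : ∀ i, ∃ q, i ∈ B q)
    (hnz : ∀ q, ∃ i ∈ B q, lam i ≠ 0) :
    ∑ q, Real.sqrt ((∑ i ∈ B q, (lam i) ^ 2) ^ 3 / (∑ i ∈ B q, (lam i) ^ 4))
      ≤ ∑ i, |lam i| := by
  classical
  have key : ∀ q, Real.sqrt ((∑ i ∈ B q, (lam i) ^ 2) ^ 3 / (∑ i ∈ B q, (lam i) ^ 4))
      ≤ ∑ i ∈ B q, |lam i| := by
    intro q
    obtain ⟨i0, hi0, hne⟩ := hnz q
    set s := B q with hs
    have hp4 : 0 < ∑ i ∈ s, lam i ^ 4 :=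
      Finset.sum_pos' (fun i _ => by positivity) ⟨i0, hi0, by positivity⟩
    have hp2 : 0 < ∑ i ∈ s, lam i ^ 2 :=
      Finset.sum_pos' (fun i _ => by positivity) ⟨i0, hi0, by positivity⟩
    have hp1 : 0 ≤ ∑ i ∈ s, |lam i| := Finset.sum_nonneg fun i _ => abs_nonneg _
    -- Cauchy–Schwarz 1: (∑ λ²)² ≤ (∑ |λ|) * (∑ λ²|λ|)
    have h1 : (∑ i ∈ s, lam i ^ 2) ^ 2 ≤
        (∑ i ∈ s, |lam i|) * (∑ i ∈ s, lam i ^ 2 * |lam i|) := by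
      have := Finset.sum_mul_sq_le_sq_mul_sq s
        (fun i => Real.sqrt |lam i|) (fun i => |lam i| * Real.sqrt |lam i|)
      have e1 : ∀ i ∈ s, Real.sqrt |lam i| * (|lam i| * Real.sqrt |lam i|)
          = lam i ^ 2 := by
        intro i _
        rw [show Real.sqrt |lam i| * (|lam i| * Real.sqrt |lam i|)
            = Real.sqrt |lam i| * Real.sqrt |lam i| * |lam i| by ring,
          Real.mul_self_sqrt (abs_nonneg _), ← abs_mul, ← sq, abs_sq]
      have e2 : ∀ i ∈ s, Real.sqrt |lam i| ^ 2 = |lam i| := fun i _ =>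
        Real.sq_sqrt (abs_nonneg _)
      have e3 : ∀ i ∈ s, (|lam i| * Real.sqrt |lam i|) ^ 2 = lam i ^ 2 * |lam i| := by
        intro i _
        rw [mul_pow, Real.sq_sqrt (abs_nonneg _), sq_abs]
      rwa [Finset.sum_congr rfl e1, Finset.sum_congr rfl e2, Finset.sum_congr rfl e3]
        at this
    -- Cauchy–Schwarz 2: (∑ λ²|λ|)² ≤ (∑ λ²) * (∑ λ⁴)
    have h2 : (∑ i ∈ s, lam i ^ 2 * |lam i|) ^ 2 ≤
        (∑ i ∈ s, lam i ^ 2) * (∑ i ∈ s, lam i ^ 4) := by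
      have := Finset.sum_mul_sq_le_sq_mul_sq s (fun i => lam i) (fun i => lam i * |lam i|)
      have e1 : ∀ i ∈ s, lam i * (lam i * |lam i|) = lam i ^ 2 * |lam i| := by
        intro i _; ring
      have e3 : ∀ i ∈ s, (lam i * |lam i|) ^ 2 = lam i ^ 4 := by
        intro i _
        rw [mul_pow, sq_abs]; ring
      rwa [Finset.sum_congr rfl e1, Finset.sum_congr rfl e3] at this
    -- combine: p₂³ ≤ p₄ * p₁²
    have hmain : (∑ i ∈ s, lam i ^ 2) ^ 3 ≤
        (∑ i ∈ s, lam i ^ 4) * (∑ i ∈ s, |lam i|) ^ 2 := by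
      have h3 : ((∑ i ∈ s, lam i ^ 2) ^ 2) ^ 2 ≤
          ((∑ i ∈ s, |lam i|) * (∑ i ∈ s, lam i ^ 2 * |lam i|)) ^ 2 := by
        apply pow_le_pow_left₀ (by positivity) h1
      have h4 : ((∑ i ∈ s, |lam i|) * (∑ i ∈ s, lam i ^ 2 * |lam i|)) ^ 2
          ≤ (∑ i ∈ s, |lam i|) ^ 2 * ((∑ i ∈ s, lam i ^ 2) * (∑ i ∈ s, lam i ^ 4)) := by
        rw [mul_pow]
        exact mul_le_mul_of_nonneg_left h2 (by positivity)
      have h5 : (∑ i ∈ s, lam i ^ 2) ^ 4 ≤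
          (∑ i ∈ s, |lam i|) ^ 2 * ((∑ i ∈ s, lam i ^ 2) * (∑ i ∈ s, lam i ^ 4)) := by
        calc (∑ i ∈ s, lam i ^ 2) ^ 4 = ((∑ i ∈ s, lam i ^ 2) ^ 2) ^ 2 := by ring
          _ ≤ _ := le_trans h3 h4
      have := le_of_mul_le_mul_right (a := ∑ i ∈ s, lam i ^ 2)
        (by calc (∑ i ∈ s, lam i ^ 2) ^ 3 * (∑ i ∈ s, lam i ^ 2)
              = (∑ i ∈ s, lam i ^ 2) ^ 4 := by ring
            _ ≤ _ := h5
            _ = (∑ i ∈ s, lam i ^ 4) * (∑ i ∈ s, |lam i|) ^ 2 * (∑ i ∈ s, lam i ^ 2) := by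
                ring) hp2
      exact this
    have hdiv : (∑ i ∈ s, lam i ^ 2) ^ 3 / (∑ i ∈ s, lam i ^ 4)
        ≤ (∑ i ∈ s, |lam i|) ^ 2 := by
      rw [div_le_iff₀ hp4]
      linarith [hmain]
    calc Real.sqrt ((∑ i ∈ s, lam i ^ 2) ^ 3 / (∑ i ∈ s, lam i ^ 4))
        ≤ Real.sqrt ((∑ i ∈ s, |lam i|) ^ 2) := Real.sqrt_le_sqrt hdiv
      _ = ∑ i ∈ s, |lam i| := Real.sqrt_sq hp1
  have hpart : ∑ i, |lam i| = ∑ q, ∑ i ∈ B q, |lam i| := by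
    have huniv : (Finset.univ : Finset I) = Finset.univ.biUnion B := by
      ext i
      simp only [Finset.mem_biUnion, Finset.mem_univ, true_iff, true_and]
      exact hcover i
    rw [huniv, Finset.sum_biUnion]
    intro q _ q' _ hqq'
    exact hdisj q q' hqq'
  rw [hpart]
  exact Finset.sum_le_sum fun q _ => key q
end

section
/- Let ψ : Fin a × Fin b → ℂ be a unit vector and ρ = ψ ψᴴ the corresponding rank-one density matrix (ρ x y = ψ x · conj (ψ y)). Let ρ_A be the reduced matrix on the first factor, (ρ_A) i k = ∑ j, ρ ((i,j),(k,j)), which is positive semidefinite. Then the trace norm of the partial transpose satisfies ∑ i, |eig(ρ^Γ) i| = ( tr( √ρ_A ) )², where √ρ_A is the positive semidefinite square root of ρ_A. Equivalently, for pure states the PT negativity equals the 1/2-Rényi entanglement entropy: E(ρ) = S_{1/2}(ρ_A). -/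
open Matrix BigOperators ComplexOrder
open Kronecker

/-- The positive semidefinite square root of a positive semidefinite matrix
(the definition removed from Mathlib, restated with its old meaning). -/
noncomputable def Matrix.PosSemidef.sqrt {n 𝕜 : Type*} [Fintype n] [RCLike 𝕜] [DecidableEq n]
    {A : Matrix n n 𝕜} (hA : A.PosSemidef) : Matrix n n 𝕜 :=
  hA.1.eigenvectorUnitary.1 * diagonal ((↑) ∘ (√·) ∘ hA.1.eigenvalues) *
  (star hA.1.eigenvectorUnitary : Matrix n n 𝕜)

open scoped MatrixOrder in
lemma Matrix.PosSemidef.sqrt_eq_cfcSqrt {n : Type*} [Fintype n] [DecidableEq n]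
    {A : Matrix n n ℂ} (hA : A.PosSemidef) : hA.sqrt = CFC.sqrt A := by
  rw [CFC.sqrt_eq_cfc, cfc_nnreal_eq_real _ A hA.nonneg, hA.1.cfc_eq]
  simp only [IsHermitian.cfc, Unitary.conjStarAlgAut_apply, Matrix.PosSemidef.sqrt]
  congr 3
  funext i
  simp [Real.coe_toNNReal _ (hA.eigenvalues_nonneg i), max_eq_left (hA.eigenvalues_nonneg i)]

open scoped MatrixOrder in
lemma Matrix.PosSemidef.posSemidef_sqrt {n : Type*} [Fintype n] [DecidableEq n]
    {A : Matrix n n ℂ} (hA : A.PosSemidef) : hA.sqrt.PosSemidef := by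
  rw [hA.sqrt_eq_cfcSqrt]; exact (CFC.sqrt_nonneg A).posSemidef

open scoped MatrixOrder in
lemma Matrix.PosSemidef.sqrt_mul_self {n : Type*} [Fintype n] [DecidableEq n]
    {A : Matrix n n ℂ} (hA : A.PosSemidef) : hA.sqrt * hA.sqrt = A := by
  rw [hA.sqrt_eq_cfcSqrt]; exact CFC.sqrt_mul_sqrt_self A hA.nonneg

open scoped MatrixOrder in
lemma Matrix.PosSemidef.eq_sqrt_of_sq_eq {n : Type*} [Fintype n] [DecidableEq n]
    {B : Matrix n n ℂ} (hB : B.PosSemidef) {A : Matrix n n ℂ} (hA : A.PosSemidef)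
    (hAB : B ^ 2 = A) : B = hA.sqrt := by
  rw [hA.sqrt_eq_cfcSqrt, eq_comm, CFC.sqrt_eq_iff A B hA.nonneg hB.nonneg, ← pow_two, hAB]

open scoped MatrixOrder in
lemma Matrix.posSemidef_iff_eq_transpose_mul_self {n : Type*} [Fintype n]
    {A : Matrix n n ℂ} : A.PosSemidef ↔ ∃ B : Matrix n n ℂ, A = Bᴴ * B := by
  classical
  rw [← Matrix.nonneg_iff_posSemidef]; exact CStarAlgebra.nonneg_iff_eq_star_mul_self

variable {n m : Type*} [Fintype n] [Fintype m] [DecidableEq n] [DecidableEq m]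
open Kronecker in
lemma trace_unitary_conj_diag (U : Matrix n n ℂ) (hU : U ∈ Matrix.unitaryGroup n ℂ)
    (d : n → ℂ) : (U * diagonal d * star U).trace = ∑ i, d i := by
  rw [trace_mul_cycle, Matrix.mem_unitaryGroup_iff'.mp hU, one_mul, trace_diagonal]

lemma unitary_conj_diag_mul (U : Matrix n n ℂ) (hU : U ∈ Matrix.unitaryGroup n ℂ)
    (d e : n → ℂ) :
    (U * diagonal d * star U) * (U * diagonal e * star U) = U * diagonal (d * e) * star U := by
  have h1 : star U * U = 1 := Matrix.mem_unitaryGroup_iff'.mp hU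
  have : U * diagonal d * star U * (U * diagonal e * star U)
      = U * (diagonal d * (star U * U) * diagonal e) * star U := by
    simp only [Matrix.mul_assoc]
  rw [this, h1, mul_one, diagonal_mul_diagonal]; rfl

lemma posSemidef_unitary_conj_diag (U : Matrix n n ℂ) (hU : U ∈ Matrix.unitaryGroup n ℂ)
    (d : n → ℝ) (hd : ∀ i, 0 ≤ d i) :
    Matrix.PosSemidef (U * diagonal (fun i => (d i : ℂ)) * star U) := by
  apply Matrix.PosSemidef.mul_mul_conjTranspose_same
  exact Matrix.posSemidef_diagonal_iff.mpr fun i => by exact_mod_cast hd i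

lemma sqrt_congr {A B : Matrix n n ℂ} (h : A = B) (hA : A.PosSemidef) (hB : B.PosSemidef) :
    hA.sqrt = hB.sqrt := by subst h; rfl

lemma sqrt_conj_diag (U : Matrix n n ℂ) (hU : U ∈ Matrix.unitaryGroup n ℂ)
    (d : n → ℝ) (hd : ∀ i, 0 ≤ d i)
    (hP : Matrix.PosSemidef (U * diagonal (fun i => (d i : ℂ)) * star U)) :
    hP.sqrt = U * diagonal (fun i => (Real.sqrt (d i) : ℂ)) * star U := by
  symm
  apply Matrix.PosSemidef.eq_sqrt_of_sq_eq
      (posSemidef_unitary_conj_diag U hU _ (fun i => Real.sqrt_nonneg _))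
  rw [pow_two, unitary_conj_diag_mul U hU]
  have : ((fun i => (Real.sqrt (d i) : ℂ)) * fun i => (Real.sqrt (d i) : ℂ))
      = fun i => (d i : ℂ) := by
    funext i
    simp only [Pi.mul_apply, ← Complex.ofReal_mul, Real.mul_self_sqrt (hd i)]
  rw [this]

/-- trace of the sqrt of a PSD matrix is the sum of square roots of eigenvalues -/
lemma trace_sqrt_eq_sum (B : Matrix n n ℂ) (hB : B.PosSemidef) :
    hB.sqrt.trace = ∑ i, (Real.sqrt (hB.1.eigenvalues i) : ℂ) := by
  have hspec : B = (hB.1.eigenvectorUnitary : Matrix n n ℂ) *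
      diagonal (fun i => (hB.1.eigenvalues i : ℂ)) * star (hB.1.eigenvectorUnitary : Matrix n n ℂ) :=
    hB.1.spectral_theorem
  have hP : Matrix.PosSemidef ((hB.1.eigenvectorUnitary : Matrix n n ℂ) *
      diagonal (fun i => (hB.1.eigenvalues i : ℂ)) * star (hB.1.eigenvectorUnitary : Matrix n n ℂ)) := by
    rw [← hspec]; exact hB
  rw [sqrt_congr hspec hB hP, sqrt_conj_diag _ hB.1.eigenvectorUnitary.2 _ hB.eigenvalues_nonneg,
    trace_unitary_conj_diag _ hB.1.eigenvectorUnitary.2]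

/-- trace of sqrt(H*H) is sum of |eigenvalues of H| -/
lemma trace_sqrt_sq_eq_sum_abs (H : Matrix n n ℂ) (hH : H.IsHermitian)
    (hP : (H * H).PosSemidef) :
    hP.sqrt.trace = ((∑ i, |hH.eigenvalues i| : ℝ) : ℂ) := by
  set U : Matrix n n ℂ := (hH.eigenvectorUnitary : Matrix n n ℂ) with hUdef
  have hU := hH.eigenvectorUnitary.2
  have hspec : H = U * diagonal (fun i => (hH.eigenvalues i : ℂ)) * star U := hH.spectral_theorem
  have hsq : H * H = U * diagonal (fun i => ((hH.eigenvalues i ^ 2 : ℝ) : ℂ)) * star U := by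
    have h2 : (U * diagonal (fun i => (hH.eigenvalues i : ℂ)) * star U) *
        (U * diagonal (fun i => (hH.eigenvalues i : ℂ)) * star U) = H * H := by rw [← hspec]
    rw [← h2, unitary_conj_diag_mul U hU]
    have : ((fun i => (hH.eigenvalues i : ℂ)) * fun i => (hH.eigenvalues i : ℂ))
        = fun i => ((hH.eigenvalues i ^ 2 : ℝ) : ℂ) := by
      funext i
      push_cast [Pi.mul_apply]
      ring
    rw [this]
  have hP' : Matrix.PosSemidef (U * diagonal (fun i => ((hH.eigenvalues i ^ 2 : ℝ) : ℂ)) * star U) := by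
    rw [← hsq]; exact hP
  rw [sqrt_congr hsq hP hP', sqrt_conj_diag U hU _ (fun i => sq_nonneg _),
    trace_unitary_conj_diag U hU]
  push_cast
  congr 1
  funext i
  rw [Real.sqrt_sq_eq_abs]

open Kronecker in
lemma conjTranspose_kron (A : Matrix n n ℂ) (B : Matrix m m ℂ) :
    (A ⊗ₖ B)ᴴ = Aᴴ ⊗ₖ Bᴴ := by
  ext ⟨i, j⟩ ⟨k, l⟩
  simp [conjTranspose_apply, kroneckerMap_apply, star_mul']

open Kronecker in
lemma posSemidef_kron {A : Matrix n n ℂ} {B : Matrix m m ℂ}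
    (hA : A.PosSemidef) (hB : B.PosSemidef) : (A ⊗ₖ B).PosSemidef := by
  obtain ⟨C, hC⟩ := Matrix.posSemidef_iff_eq_transpose_mul_self.mp hA
  obtain ⟨D, hD⟩ := Matrix.posSemidef_iff_eq_transpose_mul_self.mp hB
  rw [hC, hD, Matrix.mul_kronecker_mul, ← conjTranspose_kron]
  exact Matrix.posSemidef_conjTranspose_mul_self _

open Kronecker in
lemma sqrt_kron {A : Matrix n n ℂ} {B : Matrix m m ℂ}
    (hA : A.PosSemidef) (hB : B.PosSemidef) (hAB : (A ⊗ₖ B).PosSemidef) :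
    hAB.sqrt = hA.sqrt ⊗ₖ hB.sqrt := by
  symm
  apply Matrix.PosSemidef.eq_sqrt_of_sq_eq (posSemidef_kron hA.posSemidef_sqrt hB.posSemidef_sqrt)
  rw [pow_two, ← Matrix.mul_kronecker_mul, hA.sqrt_mul_self, hB.sqrt_mul_self]

lemma real_mul_inv_sqrt (x : ℝ) (hx : 0 ≤ x) : x * (Real.sqrt x)⁻¹ = Real.sqrt x := by
  rcases eq_or_lt_of_le hx with h | h
  · simp [← h]
  · have hs : Real.sqrt x ≠ 0 := ne_of_gt (Real.sqrt_pos.mpr h)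
    field_simp
    exact (Real.sq_sqrt hx).symm

lemma trace_sqrt_mul_conjTranspose_eq (M : Matrix n m ℂ) :
    (Matrix.posSemidef_self_mul_conjTranspose M).sqrt.trace
      = (Matrix.posSemidef_conjTranspose_mul_self M).sqrt.trace := by
  have hB : (Mᴴ * M).PosSemidef := Matrix.posSemidef_conjTranspose_mul_self M
  set μ : m → ℝ := hB.1.eigenvalues with hμdef
  have hμ0 : ∀ j, 0 ≤ μ j := hB.eigenvalues_nonneg
  set V : Matrix m m ℂ := (hB.1.eigenvectorUnitary : Matrix m m ℂ) with hVdef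
  have hV := hB.1.eigenvectorUnitary.2
  set N : Matrix n m ℂ := M * V with hNdef
  have hNN : Nᴴ * N = diagonal (fun j => (μ j : ℂ)) := by
    have h : star V * (Mᴴ * M) * V = diagonal (fun j => (μ j : ℂ)) := by
      have h0 := hB.1.conjStarAlgAut_star_eigenvectorUnitary
      rwa [Unitary.conjStarAlgAut_star_apply] at h0
    have h2 : Nᴴ * N = star V * (Mᴴ * M) * V := by
      rw [hNdef, conjTranspose_mul, Matrix.star_eq_conjTranspose]
      simp only [Matrix.mul_assoc]
    rw [h2]
    exact h
  have hcol : ∀ j, μ j = 0 → ∀ i, N i j = 0 := by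
    intro j hj i
    have hdiag : (Nᴴ * N) j j = (μ j : ℂ) := by rw [hNN, diagonal_apply_eq]
    have hsum : ∑ i, (Complex.normSq (N i j) : ℂ) = (μ j : ℂ) := by
      rw [← hdiag, Matrix.mul_apply]
      exact Finset.sum_congr rfl fun i _ => by
        rw [conjTranspose_apply, Complex.star_def, Complex.normSq_eq_conj_mul_self]
    have hsumR : ∑ i, Complex.normSq (N i j) = μ j := by exact_mod_cast hsum
    have hns : Complex.normSq (N i j) = 0 := by
      have h0 : ∑ i, Complex.normSq (N i j) = 0 := by rw [hsumR, hj]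
      exact (Finset.sum_eq_zero_iff_of_nonneg
        (fun i _ => Complex.normSq_nonneg _)).mp h0 i (Finset.mem_univ i)
    exact Complex.normSq_eq_zero.mp hns
  set g : m → ℝ := fun j => (Real.sqrt (μ j))⁻¹ with hgdef
  have hg0 : ∀ j, 0 ≤ g j := fun j => inv_nonneg.mpr (Real.sqrt_nonneg _)
  set S : Matrix n n ℂ := N * diagonal (fun j => (g j : ℂ)) * Nᴴ with hSdef
  have hSpsd : S.PosSemidef := by
    have hgg : (fun j => ((Real.sqrt (g j) : ℂ)) * (Real.sqrt (g j) : ℂ))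
        = fun j => ((g j : ℝ) : ℂ) := by
      funext j; rw [← Complex.ofReal_mul, Real.mul_self_sqrt (hg0 j)]
    have hstar : (star fun j => (Real.sqrt (g j) : ℂ)) = fun j => (Real.sqrt (g j) : ℂ) := by
      funext j; simp [Complex.star_def, Complex.conj_ofReal]
    have hmid : diagonal (fun j => (Real.sqrt (g j) : ℂ)) * diagonal (fun j => (Real.sqrt (g j) : ℂ))
        = diagonal (fun j => (g j : ℂ)) := by rw [diagonal_mul_diagonal]; exact congrArg _ hgg
    have hfac : S = (N * diagonal (fun j => (Real.sqrt (g j) : ℂ))) *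
        (N * diagonal (fun j => (Real.sqrt (g j) : ℂ)))ᴴ := by
      rw [conjTranspose_mul, diagonal_conjTranspose, hstar, Matrix.mul_assoc,
        ← Matrix.mul_assoc (diagonal _), hmid, ← Matrix.mul_assoc, hSdef]
    rw [hfac]
    exact Matrix.posSemidef_self_mul_conjTranspose _
  have h3 : N * Nᴴ = M * Mᴴ := by
    have : N * Nᴴ = M * (V * star V) * Mᴴ := by
      rw [hNdef, conjTranspose_mul, ← Matrix.star_eq_conjTranspose V]
      simp only [Matrix.mul_assoc]
    rw [this, Matrix.mem_unitaryGroup_iff.mp hV, Matrix.mul_one]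
  have h2 : N * diagonal (fun j => (g j : ℂ) * (μ j : ℂ) * (g j : ℂ)) * Nᴴ = N * Nᴴ := by
    ext i k
    rw [Matrix.mul_apply, Matrix.mul_apply]
    apply Finset.sum_congr rfl
    intro j _
    rw [Matrix.mul_diagonal]
    rcases eq_or_lt_of_le (hμ0 j) with h | h
    · simp [hcol j h.symm i]
    · have he : (g j : ℂ) * (μ j : ℂ) * (g j : ℂ) = 1 := by
        have hgr : g j * μ j * g j = 1 := by
          have hs : Real.sqrt (μ j) ≠ 0 := ne_of_gt (Real.sqrt_pos.mpr h)
          rw [hgdef]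
          field_simp
          exact (Real.sq_sqrt (hμ0 j)).symm
        calc (g j : ℂ) * (μ j : ℂ) * (g j : ℂ) = ((g j * μ j * g j : ℝ) : ℂ) := by push_cast; ring
          _ = 1 := by rw [hgr]; norm_num
      rw [he, mul_one]
  have hS2 : S * S = M * Mᴴ := by
    have h1 : S * S = N * (diagonal (fun j => (g j : ℂ)) * (Nᴴ * N) *
        diagonal (fun j => (g j : ℂ))) * Nᴴ := by
      rw [hSdef]; simp only [Matrix.mul_assoc]
    rw [h1, hNN, diagonal_mul_diagonal, diagonal_mul_diagonal, ← h3]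
    exact h2
  have hsqrt : S = (Matrix.posSemidef_self_mul_conjTranspose M).sqrt :=
    hSpsd.eq_sqrt_of_sq_eq _ (by rw [pow_two, hS2])
  rw [← hsqrt, trace_sqrt_eq_sum _ hB]
  rw [hSdef, trace_mul_cycle, hNN, diagonal_mul_diagonal, trace_diagonal]
  apply Finset.sum_congr rfl
  intro j _
  simp only [hgdef]
  rw [← Complex.ofReal_mul, real_mul_inv_sqrt _ (hμ0 j)]

/-- For a pure state `ρ = ψψᴴ`, the trace norm of the partial transpose equals
`(tr √ρ_A)²`, i.e. the PT negativity equals the 1/2-Rényi entanglement entropy: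
`E(ρ) = S_{1/2}(ρ_A)`. -/
theorem pure_state_negativity_eq_half_renyi {a b : ℕ}
    (ψ : Fin a × Fin b → ℂ) (hunit : ∑ x, ‖ψ x‖ ^ 2 = 1)
    (ρ : Matrix (Fin a × Fin b) (Fin a × Fin b) ℂ)
    (hρ : ∀ x y, ρ x y = ψ x * star (ψ y))
    (hΓ : (PT ρ).IsHermitian)
    (ρA : Matrix (Fin a) (Fin a) ℂ)
    (hρA : ∀ i k, ρA i k = ∑ j, ρ (i, j) (k, j))
    (hApsd : ρA.PosSemidef) :
    ((∑ i, |hΓ.eigenvalues i| : ℝ) : ℂ) = (hApsd.sqrt.trace) ^ 2 := by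
  classical
  set M : Matrix (Fin a) (Fin b) ℂ := Matrix.of (fun i j => ψ (i, j)) with hMdef
  have hMA : ρA = M * Mᴴ := by
    ext i k
    rw [hρA, Matrix.mul_apply]
    exact Finset.sum_congr rfl fun j _ => by
      rw [hρ, conjTranspose_apply]; rfl
  have hBpsd : (Mᴴ * M).PosSemidef := Matrix.posSemidef_conjTranspose_mul_self M
  have hkron : PT ρ * PT ρ = ρA ⊗ₖ (Mᴴ * M) := by
    ext x y
    obtain ⟨i, j⟩ := x
    obtain ⟨k, l⟩ := y
    simp only [Matrix.mul_apply, Matrix.kroneckerMap_apply, PT, hρA, hρ,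
      Matrix.conjTranspose_apply, Matrix.of_apply, Fintype.sum_prod_type]
    rw [Finset.sum_mul_sum, Finset.sum_comm]
    apply Finset.sum_congr rfl
    intro n _
    apply Finset.sum_congr rfl
    intro m _
    simp only [hMdef, Matrix.of_apply]
    ring
  have hkpsd : (ρA ⊗ₖ (Mᴴ * M)).PosSemidef := posSemidef_kron hApsd hBpsd
  have hPP : (PT ρ * PT ρ).PosSemidef := by rw [hkron]; exact hkpsd
  have e1 : hPP.sqrt.trace = ((∑ i, |hΓ.eigenvalues i| : ℝ) : ℂ) :=
    trace_sqrt_sq_eq_sum_abs _ hΓ hPP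
  have e2 : hPP.sqrt = hkpsd.sqrt := sqrt_congr hkron hPP hkpsd
  have e3 : hkpsd.sqrt.trace = hApsd.sqrt.trace * hBpsd.sqrt.trace := by
    rw [sqrt_kron hApsd hBpsd hkpsd, Matrix.trace_kronecker]
  have e4 : hBpsd.sqrt.trace = hApsd.sqrt.trace := by
    have h5 := trace_sqrt_mul_conjTranspose_eq M
    have h6 : (Matrix.posSemidef_self_mul_conjTranspose M).sqrt = hApsd.sqrt :=
      sqrt_congr hMA.symm _ hApsd
    rw [h6] at h5
    exact h5.symm
  rw [← e1, e2, e3, e4, pow_two]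
end

section
/- Let ρ be a positive semidefinite complex matrix on ℂ^(Fin a × Fin b), with reduced matrices ρ_A ((ρ_A) i k = ∑ j, ρ ((i,j),(k,j))) and ρ_B ((ρ_B) j l = ∑ i, ρ ((i,j),(i,l))). Then the rank of the partial transpose is bounded by the product of the ranks of the reduced matrices: rank(ρ^Γ) ≤ rank(ρ_A) · rank(ρ_B). Equivalently, ln p₀ ≤ S₀(ρ_A) + S₀(ρ_B), where p₀ counts the nonzero eigenvalues of ρ^Γ and S₀ is the max-entropy (log of the rank). -/
open Matrix BigOperators ComplexOrder

open Kronecker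

section Aux

variable {n : Type*} [Fintype n] [DecidableEq n]

/-- 0/1 indicator of the nonzero eigenvalues of a Hermitian matrix. -/
noncomputable def projd {M : Matrix n n ℂ} (hM : M.IsHermitian) : n → ℂ :=
  fun i => if hM.eigenvalues i = 0 then 0 else 1

/-- Orthogonal projection onto the range of a Hermitian matrix. -/
noncomputable def proj {M : Matrix n n ℂ} (hM : M.IsHermitian) : Matrix n n ℂ :=
  (hM.eigenvectorUnitary : Matrix n n ℂ) * diagonal (projd hM)
    * (star (hM.eigenvectorUnitary : Matrix n n ℂ))

lemma sandwich_mul (U D E : Matrix n n ℂ) (hU : star U * U = 1) :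
    (U * D * star U) * (U * E * star U) = U * (D * E) * star U := by
  calc (U * D * star U) * (U * E * star U)
      = U * D * ((star U * U) * (E * star U)) := by noncomm_ring
    _ = U * (D * E) * star U := by rw [hU, one_mul]; noncomm_ring

lemma mul_proj {M : Matrix n n ℂ} (hM : M.IsHermitian) : M * proj hM = M := by
  set U : Matrix n n ℂ := (hM.eigenvectorUnitary : Matrix n n ℂ) with hUdef
  have hU : star U * U = 1 := (Matrix.mem_unitaryGroup_iff').mp (hM.eigenvectorUnitary).2
  set Dv : Matrix n n ℂ := diagonal (RCLike.ofReal ∘ hM.eigenvalues) with hDv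
  have h1 : M = U * Dv * star U := hM.spectral_theorem
  have h2 : M * proj hM = (U * Dv * star U) * proj hM := by rw [← h1]
  rw [h2, proj, sandwich_mul _ _ _ hU]
  have h3 : Dv * diagonal (projd hM) = Dv := by
    rw [hDv, diagonal_mul_diagonal]
    have : (fun i => (RCLike.ofReal ∘ hM.eigenvalues : n → ℂ) i * projd hM i)
        = (RCLike.ofReal ∘ hM.eigenvalues : n → ℂ) := by
      funext i
      by_cases h : hM.eigenvalues i = 0 <;> simp [projd, h]
    rw [this]
  rw [h3, ← h1]

lemma proj_conjTranspose {M : Matrix n n ℂ} (hM : M.IsHermitian) : (proj hM)ᴴ = proj hM := by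
  have hd : star (projd hM) = projd hM := by
    funext i
    by_cases h : hM.eigenvalues i = 0 <;> simp [projd, h]
  simp only [proj, conjTranspose_mul, conjTranspose_conjTranspose, star_eq_conjTranspose,
    diagonal_conjTranspose, hd, mul_assoc]

lemma isUnit_det_unitary (U : Matrix n n ℂ) (hU : star U * U = 1) : IsUnit U.det := by
  apply (Matrix.isUnit_iff_isUnit_det U).mp
  exact ⟨⟨U, star U, mul_eq_one_comm.mp hU, hU⟩, rfl⟩

lemma rank_eq_card_projd {M : Matrix n n ℂ} (hM : M.IsHermitian) :
    M.rank = Fintype.card {i // projd hM i ≠ 0} := by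
  classical
  set U : Matrix n n ℂ := (hM.eigenvectorUnitary : Matrix n n ℂ) with hUdef
  have hU : star U * U = 1 := (Matrix.mem_unitaryGroup_iff').mp (hM.eigenvectorUnitary).2
  have hdetU : IsUnit U.det := isUnit_det_unitary U hU
  have hdetsU : IsUnit (star U).det := by
    rw [star_eq_conjTranspose, det_conjTranspose]
    exact hdetU.star
  have h2 : M.rank = (diagonal (RCLike.ofReal ∘ hM.eigenvalues : n → ℂ)).rank := by
    conv_lhs => rw [show M = U * diagonal (RCLike.ofReal ∘ hM.eigenvalues : n → ℂ) * star U from hM.spectral_theorem]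
    rw [mul_assoc, rank_mul_eq_right_of_isUnit_det U _ hdetU,
      rank_mul_eq_left_of_isUnit_det (star U) _ hdetsU]
  rw [h2, rank_diagonal]
  apply Fintype.card_congr
  apply Equiv.subtypeEquivRight
  intro i
  by_cases h : hM.eigenvalues i = 0 <;> simp [projd, h, Function.comp]

variable {m : Type*} [Fintype m] [DecidableEq m]

lemma rank_proj_kron {M : Matrix n n ℂ} {N : Matrix m m ℂ}
    (hM : M.IsHermitian) (hN : N.IsHermitian) :
    (proj hM ⊗ₖ (proj hN)ᵀ).rank = M.rank * N.rank := by
  classical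
  set U : Matrix n n ℂ := (hM.eigenvectorUnitary : Matrix n n ℂ) with hUdef
  have hU : star U * U = 1 := (Matrix.mem_unitaryGroup_iff').mp (hM.eigenvectorUnitary).2
  set V : Matrix m m ℂ := (hN.eigenvectorUnitary : Matrix m m ℂ) with hVdef
  have hV : star V * V = 1 := (Matrix.mem_unitaryGroup_iff').mp (hN.eigenvectorUnitary).2
  have hPNt : (proj hN)ᵀ = (star V)ᵀ * diagonal (projd hN) * Vᵀ := by
    rw [proj, transpose_mul, transpose_mul, diagonal_transpose, mul_assoc]
  have hfact : proj hM ⊗ₖ (proj hN)ᵀ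
      = ((U ⊗ₖ (star V)ᵀ) * (diagonal (projd hM) ⊗ₖ diagonal (projd hN)))
        * (star U ⊗ₖ Vᵀ) := by
    rw [proj, hPNt, ← mul_kronecker_mul, ← mul_kronecker_mul]
  have hdetU : IsUnit U.det := isUnit_det_unitary U hU
  have hdetV : IsUnit V.det := isUnit_det_unitary V hV
  have hdetsU : IsUnit (star U).det := by
    rw [star_eq_conjTranspose, det_conjTranspose]; exact hdetU.star
  have hdetsV : IsUnit (star V).det := by
    rw [star_eq_conjTranspose, det_conjTranspose]; exact hdetV.star
  have hdet1 : IsUnit (U ⊗ₖ (star V)ᵀ).det := by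
    rw [det_kronecker, det_transpose]
    exact (hdetU.pow _).mul (hdetsV.pow _)
  have hdet2 : IsUnit (star U ⊗ₖ Vᵀ).det := by
    rw [det_kronecker, det_transpose]
    exact (hdetsU.pow _).mul (hdetV.pow _)
  rw [hfact, rank_mul_eq_left_of_isUnit_det _ _ hdet2,
    rank_mul_eq_right_of_isUnit_det _ _ hdet1, diagonal_kronecker_diagonal, rank_diagonal,
    rank_eq_card_projd hM, rank_eq_card_projd hN, ← Fintype.card_prod]
  apply Fintype.card_congr
  exact (Equiv.subtypeEquivRight (fun p => mul_ne_zero_iff)).trans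
    (Equiv.subtypeProdEquivProd (p := fun i => projd hM i ≠ 0) (q := fun j => projd hN j ≠ 0))

end Aux

lemma aux_kerA {a b : ℕ} (ρ : Matrix (Fin a × Fin b) (Fin a × Fin b) ℂ) (hρ : ρ.PosSemidef)
    (ρA : Matrix (Fin a) (Fin a) ℂ) (hρA : ∀ i k, ρA i k = ∑ j, ρ (i, j) (k, j))
    (x : Fin a → ℂ) (hx : ρA *ᵥ x = 0) (j : Fin b) :
    ρ *ᵥ (fun p => x p.1 * (if p.2 = j then 1 else 0)) = 0 := by
  set v : Fin b → (Fin a × Fin b → ℂ) :=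
    fun j p => x p.1 * (if p.2 = j then 1 else 0) with hv
  have lhs : ∀ j, star (v j) ⬝ᵥ ρ *ᵥ (v j)
      = ∑ i, ∑ k, star (x i) * (ρ (i, j) (k, j) * x k) := by
    intro j
    simp only [dotProduct, mulVec, Pi.star_apply, hv, Fintype.sum_prod_type,
      apply_ite (star : ℂ → ℂ), star_mul', star_one, star_zero, mul_ite, ite_mul,
      mul_zero, zero_mul, mul_one, one_mul, Finset.sum_ite_irrel, Finset.sum_const_zero,
      Finset.sum_ite_eq', Finset.mem_univ, if_true, Finset.mul_sum]
  have rhs : star x ⬝ᵥ ρA *ᵥ x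
      = ∑ i, ∑ k, ∑ j, star (x i) * (ρ (i, j) (k, j) * x k) := by
    simp only [dotProduct, mulVec, Pi.star_apply, hρA, Finset.mul_sum, Finset.sum_mul]
  have hsum : ∑ j, star (v j) ⬝ᵥ ρ *ᵥ (v j) = star x ⬝ᵥ ρA *ᵥ x := by
    rw [rhs]
    calc ∑ j, star (v j) ⬝ᵥ ρ *ᵥ (v j)
        = ∑ j, ∑ i, ∑ k, star (x i) * (ρ (i, j) (k, j) * x k) :=
          Finset.sum_congr rfl (fun j _ => lhs j)
      _ = ∑ i, ∑ j, ∑ k, star (x i) * (ρ (i, j) (k, j) * x k) := Finset.sum_comm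
      _ = ∑ i, ∑ k, ∑ j, star (x i) * (ρ (i, j) (k, j) * x k) :=
          Finset.sum_congr rfl (fun i _ => Finset.sum_comm)
  have h0 : ∑ j, star (v j) ⬝ᵥ ρ *ᵥ (v j) = 0 := by rw [hsum, hx, dotProduct_zero]
  have key := (Finset.sum_eq_zero_iff_of_nonneg (fun j _ => hρ.dotProduct_mulVec_nonneg (v j))).mp h0 j
    (Finset.mem_univ j)
  exact (hρ.dotProduct_mulVec_zero_iff (v j)).mp key

lemma aux_kerB {a b : ℕ} (ρ : Matrix (Fin a × Fin b) (Fin a × Fin b) ℂ) (hρ : ρ.PosSemidef)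
    (ρB : Matrix (Fin b) (Fin b) ℂ) (hρB : ∀ j l, ρB j l = ∑ i, ρ (i, j) (i, l))
    (y : Fin b → ℂ) (hy : ρB *ᵥ y = 0) (i : Fin a) :
    ρ *ᵥ (fun p => (if p.1 = i then 1 else 0) * y p.2) = 0 := by
  set v : Fin a → (Fin a × Fin b → ℂ) :=
    fun i p => (if p.1 = i then 1 else 0) * y p.2 with hv
  have lhs : ∀ i, star (v i) ⬝ᵥ ρ *ᵥ (v i)
      = ∑ j, ∑ l, star (y j) * (ρ (i, j) (i, l) * y l) := by
    intro i
    simp only [dotProduct, mulVec, Pi.star_apply, hv, Fintype.sum_prod_type,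
      apply_ite (star : ℂ → ℂ), star_mul', star_one, star_zero, mul_ite, ite_mul,
      mul_zero, zero_mul, mul_one, one_mul, Finset.sum_ite_irrel, Finset.sum_const_zero,
      Finset.sum_ite_eq', Finset.mem_univ, if_true, Finset.mul_sum]
  have rhs : star y ⬝ᵥ ρB *ᵥ y
      = ∑ j, ∑ l, ∑ i, star (y j) * (ρ (i, j) (i, l) * y l) := by
    simp only [dotProduct, mulVec, Pi.star_apply, hρB, Finset.mul_sum, Finset.sum_mul]
  have hsum : ∑ i, star (v i) ⬝ᵥ ρ *ᵥ (v i) = star y ⬝ᵥ ρB *ᵥ y := by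
    rw [rhs]
    calc ∑ i, star (v i) ⬝ᵥ ρ *ᵥ (v i)
        = ∑ i, ∑ j, ∑ l, star (y j) * (ρ (i, j) (i, l) * y l) :=
          Finset.sum_congr rfl (fun i _ => lhs i)
      _ = ∑ j, ∑ i, ∑ l, star (y j) * (ρ (i, j) (i, l) * y l) := Finset.sum_comm
      _ = ∑ j, ∑ l, ∑ i, star (y j) * (ρ (i, j) (i, l) * y l) :=
          Finset.sum_congr rfl (fun j _ => Finset.sum_comm)
  have h0 : ∑ i, star (v i) ⬝ᵥ ρ *ᵥ (v i) = 0 := by rw [hsum, hy, dotProduct_zero]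
  have key := (Finset.sum_eq_zero_iff_of_nonneg (fun i _ => hρ.dotProduct_mulVec_nonneg (v i))).mp h0 i
    (Finset.mem_univ i)
  exact (hρ.dotProduct_mulVec_zero_iff (v i)).mp key

/-- The rank of the partial transpose of a positive semidefinite bipartite matrix is
bounded by the product of the ranks of the reduced matrices:
`rank(ρ^Γ) ≤ rank(ρ_A) · rank(ρ_B)`, i.e. `ln p₀ ≤ S₀(ρ_A) + S₀(ρ_B)`. -/
theorem rank_PT_le_rank_reduced_mul {a b : ℕ}
    (ρ : Matrix (Fin a × Fin b) (Fin a × Fin b) ℂ) (hρ : ρ.PosSemidef)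
    (ρA : Matrix (Fin a) (Fin a) ℂ)
    (hρA : ∀ i k, ρA i k = ∑ j, ρ (i, j) (k, j))
    (ρB : Matrix (Fin b) (Fin b) ℂ)
    (hρB : ∀ j l, ρB j l = ∑ i, ρ (i, j) (i, l)) :
    (PT ρ).rank ≤ ρA.rank * ρB.rank := by
  classical
  have hHρ : ρ.IsHermitian := hρ.1
  have hHA : ρA.IsHermitian := by
    ext i k
    simp only [conjTranspose_apply, hρA, star_sum]
    exact Finset.sum_congr rfl fun j _ => hHρ.apply (i, j) (k, j)
  have hHB : ρB.IsHermitian := by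
    ext j l
    simp only [conjTranspose_apply, hρB, star_sum]
    exact Finset.sum_congr rfl fun i _ => hHρ.apply (i, j) (i, l)
  set PA := proj hHA with hPA
  set PB := proj hHB with hPB
  -- ρ * ((1 - PA) ⊗ₖ 1) = 0
  have hA0 : ρA * (1 - PA) = 0 := by rw [mul_sub, mul_one, hPA, mul_proj, sub_self]
  have hB0 : ρB * (1 - PB) = 0 := by rw [mul_sub, mul_one, hPB, mul_proj, sub_self]
  have R1 : ρ * ((1 - PA) ⊗ₖ (1 : Matrix (Fin b) (Fin b) ℂ)) = 0 := by
    ext p q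
    obtain ⟨i, j⟩ := p; obtain ⟨k, l⟩ := q
    have hx : ρA *ᵥ (fun m => (1 - PA) m k) = 0 := by
      funext i'
      have := congrFun (congrFun hA0 i') k
      simpa [mulVec, dotProduct, mul_apply] using this
    have h := congrFun (aux_kerA ρ hρ ρA hρA _ hx l) (i, j)
    simp only [mulVec, dotProduct, Pi.zero_apply] at h
    simp only [mul_apply, kroneckerMap_apply, Matrix.zero_apply]
    rw [← h]
    exact Finset.sum_congr rfl fun q _ => by
      obtain ⟨m, n⟩ := q
      simp [one_apply, eq_comm]
  have R2 : ρ * ((1 : Matrix (Fin a) (Fin a) ℂ) ⊗ₖ (1 - PB)) = 0 := by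
    ext p q
    obtain ⟨i, j⟩ := p; obtain ⟨k, l⟩ := q
    have hy : ρB *ᵥ (fun m => (1 - PB) m l) = 0 := by
      funext j'
      have := congrFun (congrFun hB0 j') l
      simpa [mulVec, dotProduct, mul_apply] using this
    have h := congrFun (aux_kerB ρ hρ ρB hρB _ hy k) (i, j)
    simp only [mulVec, dotProduct, Pi.zero_apply] at h
    simp only [mul_apply, kroneckerMap_apply, Matrix.zero_apply]
    rw [← h]
    exact Finset.sum_congr rfl fun q _ => by
      obtain ⟨m, n⟩ := q
      simp [one_apply, eq_comm]
  have RA : ρ * (PA ⊗ₖ (1 : Matrix (Fin b) (Fin b) ℂ)) = ρ := by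
    have : ((1 : Matrix (Fin a) (Fin a) ℂ) - PA) ⊗ₖ (1 : Matrix (Fin b) (Fin b) ℂ)
        = 1 - PA ⊗ₖ (1 : Matrix (Fin b) (Fin b) ℂ) := by
      ext p q
      by_cases h1 : p.1 = q.1 <;> by_cases h2 : p.2 = q.2 <;>
        simp [kroneckerMap_apply, Matrix.sub_apply, sub_mul, one_apply, Prod.ext_iff, h1, h2]
    rw [this, mul_sub, mul_one] at R1
    linear_combination (norm := noncomm_ring) -R1
  have RB : ρ * ((1 : Matrix (Fin a) (Fin a) ℂ) ⊗ₖ PB) = ρ := by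
    have : (1 : Matrix (Fin a) (Fin a) ℂ) ⊗ₖ ((1 : Matrix (Fin b) (Fin b) ℂ) - PB)
        = 1 - (1 : Matrix (Fin a) (Fin a) ℂ) ⊗ₖ PB := by
      ext p q
      by_cases h1 : p.1 = q.1 <;> by_cases h2 : p.2 = q.2 <;>
        simp [kroneckerMap_apply, Matrix.sub_apply, mul_sub, one_apply, Prod.ext_iff, h1, h2]
    rw [this, mul_sub, mul_one] at R2
    linear_combination (norm := noncomm_ring) -R2
  -- left version for A
  have LA : (PA ⊗ₖ (1 : Matrix (Fin b) (Fin b) ℂ)) * ρ = ρ := by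
    have h1 : (PA ⊗ₖ (1 : Matrix (Fin b) (Fin b) ℂ))ᴴ = PA ⊗ₖ 1 := by
      have hP : PAᴴ = PA := proj_conjTranspose hHA
      ext p q
      obtain ⟨i, j⟩ := p; obtain ⟨k, l⟩ := q
      have h2 : star (PA k i) = PA i k := congrFun (congrFun hP i) k
      simp only [conjTranspose_apply, kroneckerMap_apply, star_mul', h2, one_apply,
        apply_ite (star : ℂ → ℂ), star_one, star_zero]
      by_cases h : l = j
      · subst h; simp [mul_comm]
      · rw [if_neg h, if_neg (fun hh => h hh.symm)]
    calc (PA ⊗ₖ (1 : Matrix (Fin b) (Fin b) ℂ)) * ρ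
        = (PA ⊗ₖ (1 : Matrix (Fin b) (Fin b) ℂ))ᴴᴴ * ρᴴ := by rw [h1, hHρ.eq]; rw [h1]
      _ = (ρ * (PA ⊗ₖ (1 : Matrix (Fin b) (Fin b) ℂ))ᴴ)ᴴ := by rw [conjTranspose_mul]
      _ = ρ := by rw [h1, RA, hHρ.eq]
  -- eigen-equations for the partial transpose
  have E1 : (PA ⊗ₖ (1 : Matrix (Fin b) (Fin b) ℂ)) * PT ρ = PT ρ := by
    ext p q
    obtain ⟨i, j⟩ := p; obtain ⟨k, l⟩ := q
    have h := congrFun (congrFun LA (i, l)) (k, j)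
    simp only [mul_apply, kroneckerMap_apply, Fintype.sum_prod_type, one_apply, mul_ite,
      ite_mul, mul_zero, zero_mul, mul_one, one_mul, Finset.sum_ite_irrel,
      Finset.sum_const_zero, Finset.sum_ite_eq, Finset.sum_ite_eq', Finset.mem_univ,
      if_true, PT] at h ⊢
    exact h
  have E2 : ((1 : Matrix (Fin a) (Fin a) ℂ) ⊗ₖ PBᵀ) * PT ρ = PT ρ := by
    ext p q
    obtain ⟨i, j⟩ := p; obtain ⟨k, l⟩ := q
    have h := congrFun (congrFun RB (i, l)) (k, j)
    simp only [mul_apply, kroneckerMap_apply, Fintype.sum_prod_type, one_apply,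
      transpose_apply, mul_ite, ite_mul, mul_zero, zero_mul, mul_one, one_mul,
      Finset.sum_ite_irrel, Finset.sum_const_zero, Finset.sum_ite_eq,
      Finset.sum_ite_eq', Finset.mem_univ, if_true, PT] at h ⊢
    rw [← h]
    exact Finset.sum_congr rfl fun n _ => mul_comm _ _
  have key : PT ρ = (PA ⊗ₖ PBᵀ) * PT ρ := by
    have : PA ⊗ₖ PBᵀ = (PA ⊗ₖ (1 : Matrix (Fin b) (Fin b) ℂ))
        * ((1 : Matrix (Fin a) (Fin a) ℂ) ⊗ₖ PBᵀ) := by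
      rw [← mul_kronecker_mul, mul_one, one_mul]
    rw [this, mul_assoc, E2, E1]
  calc (PT ρ).rank = ((PA ⊗ₖ PBᵀ) * PT ρ).rank := by rw [← key]
    _ ≤ (PA ⊗ₖ PBᵀ).rank := rank_mul_le_left _ _
    _ = ρA.rank * ρB.rank := rank_proj_kron hHA hHB
end

section
/- Let ρ be a complex square matrix on ℂ^(Fin a × Fin b), set D = a*b, let 0 ≤ p ≤ 1, and let ρ' = (1−p)·ρ + (p/D)·I be the globally depolarized matrix. Then (ρ')^Γ = (1−p)·ρ^Γ + (p/D)·I, and for every natural number k the PT moments satisfy tr(((ρ')^Γ)^k) = ∑_{j=0}^{k} (k choose j) · (1−p)^j · (p/D)^{k−j} · tr((ρ^Γ)^j), where tr((ρ^Γ)^0) = D. -/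
open Matrix BigOperators

lemma PT_one {α β : Type*} [DecidableEq α] [DecidableEq β] :
    PT (1 : Matrix (α × β) (α × β) ℂ) = 1 := by
  ext x y
  simp only [PT, Matrix.one_apply, Prod.ext_iff]
  by_cases h1 : x.1 = y.1 <;> by_cases h2 : x.2 = y.2 <;>
    simp [h1, h2, eq_comm]

lemma PT_smul {α β : Type*} (c : ℂ) (ρ : Matrix (α × β) (α × β) ℂ) :
    PT (c • ρ) = c • PT ρ := rfl

lemma PT_add {α β : Type*} (ρ σ : Matrix (α × β) (α × β) ℂ) :
    PT (ρ + σ) = PT ρ + PT σ := rfl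

/-- PT moments of a globally depolarized matrix `ρ' = (1−p)·ρ + (p/D)·I` with
`D = a·b`: one has `(ρ')^Γ = (1−p)·ρ^Γ + (p/D)·I`,
`tr(((ρ')^Γ)^k) = ∑_{j=0}^{k} (k choose j)·(1−p)^j·(p/D)^{k−j}·tr((ρ^Γ)^j)`,
and `tr((ρ^Γ)^0) = D`. -/
theorem depolarized_PT_moments {a b : ℕ}
    (ρ : Matrix (Fin a × Fin b) (Fin a × Fin b) ℂ)
    (p : ℝ) (hp0 : 0 ≤ p) (hp1 : p ≤ 1)
    (ρ' : Matrix (Fin a × Fin b) (Fin a × Fin b) ℂ)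
    (hρ' : ρ' = ((1 - p : ℝ) : ℂ) • ρ + ((p / (a * b : ℕ) : ℝ) : ℂ) • (1 : Matrix (Fin a × Fin b) (Fin a × Fin b) ℂ)) :
    PT ρ' = ((1 - p : ℝ) : ℂ) • PT ρ + ((p / (a * b : ℕ) : ℝ) : ℂ) • 1 ∧
    (∀ k : ℕ, ((PT ρ') ^ k).trace =
        ∑ j ∈ Finset.range (k + 1), (k.choose j : ℂ) * ((1 - p : ℝ) : ℂ) ^ j *
          ((p / (a * b : ℕ) : ℝ) : ℂ) ^ (k - j) * ((PT ρ) ^ j).trace) ∧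
    ((PT ρ) ^ 0).trace = ((a * b : ℕ) : ℂ) := by
  set c : ℂ := ((1 - p : ℝ) : ℂ)
  set d : ℂ := ((p / (a * b : ℕ) : ℝ) : ℂ)
  have hPT : PT ρ' = c • PT ρ + d • 1 := by
    rw [hρ', PT_add, PT_smul, PT_smul, PT_one]
  have htr0 : ((PT ρ) ^ 0).trace = ((a * b : ℕ) : ℂ) := by
    simp [Matrix.trace_one]
  refine ⟨hPT, fun k => ?_, htr0⟩
  rw [hPT]
  have hcomm : Commute (c • PT ρ) (d • (1 : Matrix (Fin a × Fin b) (Fin a × Fin b) ℂ)) :=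
    ((Commute.one_right (c • PT ρ)).smul_right d)
  rw [hcomm.add_pow, Matrix.trace_sum]
  refine Finset.sum_congr rfl fun j hj => ?_
  have : (c • PT ρ) ^ j * (d • (1 : Matrix (Fin a × Fin b) (Fin a × Fin b) ℂ)) ^ (k - j) *
      ((k.choose j : ℕ) : Matrix (Fin a × Fin b) (Fin a × Fin b) ℂ)
      = ((k.choose j : ℂ) * c ^ j * d ^ (k - j)) • (PT ρ) ^ j := by
    rw [smul_pow, smul_pow, one_pow]
    rw [show ((k.choose j : ℕ) : Matrix (Fin a × Fin b) (Fin a × Fin b) ℂ)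
        = (k.choose j : ℂ) • 1 by simp [Matrix.smul_one_eq_diagonal]; rfl]
    simp only [smul_mul_assoc, mul_smul_comm, mul_one, smul_smul]
    ring_nf
  rw [this, Matrix.trace_smul, smul_eq_mul]
end

section
/- Let d ≥ 2, let S be the swap matrix on ℂ^(Fin d × Fin d) (S ((i,j),(k,l)) = 1 if i = l and j = k, else 0), let Π₊ = (I + S)/2 and Π₋ = (I − S)/2, and for α ∈ [0,1] let ρ_W = α·(2/(d·(d+1)))·Π₊ + (1−α)·(2/(d·(d−1)))·Π₋ be the Werner state. Then the partial transpose ρ_W^Γ is positive semidefinite if and only if α ≥ 1/2; equivalently, ρ_W is NPT (hence entangled by the Peres–Horodecki criterion) exactly for 0 ≤ α < 1/2. Indeed ρ_W^Γ = ((2α−1)/d)·Δ₀ + ((1+d−2α)/(d·(d²−1)))·(I − Δ₀), where Δ₀ is the rank-one projector onto the maximally entangled vector (1/√d)·∑_i e_i ⊗ e_i. -/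
open Matrix BigOperators ComplexOrder

lemma psd_real_smul {n : Type*} [Fintype n] {M : Matrix n n ℂ} (h : M.PosSemidef) {c : ℝ}
    (hc : 0 ≤ c) : ((c:ℂ) • M).PosSemidef := by
  refine PosSemidef.of_dotProduct_mulVec_nonneg ?_ ?_
  · show ((c:ℂ) • M)ᴴ = _
    rw [conjTranspose_smul]
    simp [h.1.eq]
  · intro x
    rw [smul_mulVec, dotProduct_smul, smul_eq_mul]
    exact mul_nonneg (Complex.zero_le_real.mpr hc) (h.dotProduct_mulVec_nonneg x)

lemma psd_of_proj {n : Type*} [Fintype n] {M : Matrix n n ℂ} (hh : Mᴴ = M) (hi : M * M = M) :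
    M.PosSemidef := by
  have : M = Mᴴ * M := by rw [hh, hi]
  exact this ▸ posSemidef_conjTranspose_mul_self M

/-- The Werner state `ρ_W = α·(2/(d(d+1)))·Π₊ + (1−α)·(2/(d(d−1)))·Π₋` has positive
partial transpose iff `α ≥ 1/2` (hence is NPT, thus entangled, exactly for
`0 ≤ α < 1/2`); indeed
`ρ_W^Γ = ((2α−1)/d)·Δ₀ + ((1+d−2α)/(d(d²−1)))·(I − Δ₀)`. -/
theorem werner_PPT_iff {d : ℕ} (hd : 2 ≤ d) (α : ℝ) (hα0 : 0 ≤ α) (hα1 : α ≤ 1)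
    (S : Matrix (Fin d × Fin d) (Fin d × Fin d) ℂ)
    (hS : ∀ x y, S x y = if x.1 = y.2 ∧ x.2 = y.1 then 1 else 0)
    (Psym Pasym : Matrix (Fin d × Fin d) (Fin d × Fin d) ℂ)
    (hPsym : Psym = (2 : ℂ)⁻¹ • (1 + S)) (hPasym : Pasym = (2 : ℂ)⁻¹ • (1 - S))
    (ρW : Matrix (Fin d × Fin d) (Fin d × Fin d) ℂ)
    (hρW : ρW = ((α * (2 / ((d : ℝ) * ((d : ℝ) + 1))) : ℝ) : ℂ) • Psym
        + (((1 - α) * (2 / ((d : ℝ) * ((d : ℝ) - 1))) : ℝ) : ℂ) • Pasym)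
    (Δ₀ : Matrix (Fin d × Fin d) (Fin d × Fin d) ℂ)
    (hΔ₀ : ∀ x y, Δ₀ x y = (1 / (d : ℂ)) * (if x.1 = x.2 then 1 else 0)
        * (if y.1 = y.2 then 1 else 0)) :
    ((PT ρW).PosSemidef ↔ 1 / 2 ≤ α) ∧
      PT ρW = (((2 * α - 1) / (d : ℝ) : ℝ) : ℂ) • Δ₀
        + (((1 + (d : ℝ) - 2 * α) / ((d : ℝ) * ((d : ℝ) ^ 2 - 1)) : ℝ) : ℂ) • (1 - Δ₀) := by
  have hd0 : (d : ℂ) ≠ 0 := Nat.cast_ne_zero.mpr (by omega)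
  have hd1 : (d : ℂ) - 1 ≠ 0 := by
    have : (d : ℂ) ≠ 1 := by exact_mod_cast (by omega : d ≠ 1)
    exact sub_ne_zero.mpr this
  have hdp1 : (d : ℂ) + 1 ≠ 0 := by
    have : ((d + 1 : ℕ) : ℂ) ≠ 0 := Nat.cast_ne_zero.mpr (by omega)
    push_cast at this; exact this
  have hdR : (2 : ℝ) ≤ (d : ℝ) := by exact_mod_cast hd
  -- the key matrix identity
  have key : PT ρW = (((2 * α - 1) / (d : ℝ) : ℝ) : ℂ) • Δ₀
      + (((1 + (d : ℝ) - 2 * α) / ((d : ℝ) * ((d : ℝ) ^ 2 - 1)) : ℝ) : ℂ) • (1 - Δ₀) := by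
    ext ⟨i, j⟩ ⟨k, l⟩
    simp only [PT, hρW, hPsym, hPasym, Matrix.add_apply, Matrix.smul_apply, hS, hΔ₀,
      Matrix.sub_apply, Matrix.one_apply, smul_eq_mul, Prod.mk.injEq]
    push_cast
    have hX : (if i = k ∧ l = j then (1:ℂ) else 0) = (if i = k ∧ j = l then (1:ℂ) else 0) := by
      by_cases h1 : i = k <;> by_cases h2 : j = l <;> simp [h1, h2, eq_comm]
    have hY : (if i = j ∧ l = k then (1:ℂ) else 0)
        = (if i = j then (1:ℂ) else 0) * (if k = l then (1:ℂ) else 0) := by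
      by_cases h1 : i = j <;> by_cases h2 : k = l <;> simp [h1, h2, eq_comm]
    rw [hX, hY]
    generalize (if i = k ∧ j = l then (1:ℂ) else 0) = x
    generalize (if i = j then (1:ℂ) else 0) = p
    generalize (if k = l then (1:ℂ) else 0) = q
    have hsq : ((d:ℂ) ^ 2 - 1) ≠ 0 := by
      have : (d:ℂ) ^ 2 - 1 = ((d:ℂ) - 1) * ((d:ℂ) + 1) := by ring
      rw [this]; exact mul_ne_zero hd1 hdp1
    field_simp
    ring
  refine ⟨?_, key⟩
  -- the maximally entangled vector
  set u : Fin d × Fin d → ℂ := fun x => if x.1 = x.2 then 1 else 0 with hu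
  have hΔherm : Δ₀ᴴ = Δ₀ := by
    ext ⟨i, j⟩ ⟨k, l⟩
    simp only [conjTranspose_apply, hΔ₀]
    by_cases h1 : i = j <;> by_cases h2 : k = l <;>
      simp [h1, h2, star_mul', one_div, star_inv₀, star_natCast]
  have hΔidem : Δ₀ * Δ₀ = Δ₀ := by
    ext ⟨i, j⟩ ⟨m, n⟩
    simp only [Matrix.mul_apply, hΔ₀, Fintype.sum_prod_type]
    have hterm : ∀ k l : Fin d, ((1/(d:ℂ) * if i = j then 1 else 0) * if k = l then 1 else 0) *
        ((1/(d:ℂ) * if k = l then 1 else 0) * if m = n then 1 else 0)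
        = if l = k then (1/(d:ℂ) * if i = j then 1 else 0) * (1/(d:ℂ) * if m = n then 1 else 0)
          else 0 := by
      intro k l
      by_cases h : k = l <;> simp [h, eq_comm] <;> ring
    simp only [hterm, Finset.sum_ite_eq, Finset.sum_ite_eq', Finset.mem_univ, if_true,
      Finset.sum_const, Finset.card_univ, Fintype.card_fin, nsmul_eq_mul]
    generalize (if i = j then (1:ℂ) else 0) = p
    generalize (if m = n then (1:ℂ) else 0) = q
    field_simp
  constructor
  · -- PSD → α ≥ 1/2
    intro h
    have hΔu : Δ₀ *ᵥ u = u := by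
      ext ⟨i, j⟩
      simp only [mulVec, dotProduct, hΔ₀, hu, Fintype.sum_prod_type]
      simp only [mul_ite, ite_mul, mul_one, mul_zero, one_mul, zero_mul, Finset.sum_ite_eq,
        Finset.mem_univ, if_true, Finset.sum_const, Finset.card_univ, Fintype.card_fin,
        nsmul_eq_mul]
      by_cases hij : i = j <;> simp [hij] <;> field_simp
    have hq := h.dotProduct_mulVec_nonneg u
    rw [key, add_mulVec, smul_mulVec, smul_mulVec, sub_mulVec, one_mulVec, hΔu,
      sub_self, smul_zero, add_zero, dotProduct_smul, smul_eq_mul] at hq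
    have huu : dotProduct (star u) u = (d : ℂ) := by
      simp only [dotProduct, hu, Pi.star_apply, Fintype.sum_prod_type, apply_ite, star_one,
        star_zero, ite_mul, one_mul, zero_mul, mul_ite, mul_one, mul_zero, Finset.sum_ite_eq,
        Finset.mem_univ, if_true, Finset.sum_const, Finset.card_univ, Fintype.card_fin,
        nsmul_eq_mul, mul_one]
    rw [huu] at hq
    have : (0 : ℂ) ≤ ((2 * α - 1 : ℝ) : ℂ) := by
      have : (((2 * α - 1) / (d : ℝ) : ℝ) : ℂ) * (d : ℂ) = ((2 * α - 1 : ℝ) : ℂ) := by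
        push_cast; field_simp
      rwa [this] at hq
    have := Complex.zero_le_real.mp this
    linarith
  · -- α ≥ 1/2 → PSD
    intro hα
    rw [key]
    have hc₁ : (0 : ℝ) ≤ (2 * α - 1) / (d : ℝ) := by
      apply div_nonneg <;> linarith
    have hc₂ : (0 : ℝ) ≤ (1 + (d : ℝ) - 2 * α) / ((d : ℝ) * ((d : ℝ) ^ 2 - 1)) := by
      apply div_nonneg
      · linarith
      · nlinarith
    have hΔpsd : Δ₀.PosSemidef := psd_of_proj hΔherm hΔidem
    have h1Δpsd : (1 - Δ₀).PosSemidef := by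
      apply psd_of_proj
      · rw [conjTranspose_sub, conjTranspose_one, hΔherm]
      · have : (1 - Δ₀) * (1 - Δ₀) = 1 - Δ₀ - Δ₀ + Δ₀ * Δ₀ := by noncomm_ring
        rw [this, hΔidem]; abel
    exact (psd_real_smul hΔpsd hc₁).add (psd_real_smul h1Δpsd hc₂)
end

section
/- Let ρ be a complex square matrix on ℂ^(Fin a × Fin b), let R_ρ be its realignment, and let s : Fin (min-dimension index set) → ℝ be the singular values of R_ρ (nonnegative square roots of the eigenvalues of R_ρᴴ R_ρ), not all zero. Then (∑ i, (s i)²)³ ≤ (∑ i, (s i)⁴) · (∑ i, s i)², i.e. the r₄-negativity C₄(ρ) = (1/2)·ln(r₂³/r₄) is a lower bound on the CCNR negativity C(ρ) = ln ∑ i, s i. -/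
open Matrix BigOperators

/-- The realignment of a bipartite matrix: `R_ρ (i,k) (j,l) = ρ ((i,j),(k,l))`. -/
def realign {a b : ℕ} (ρ : Matrix (Fin a × Fin b) (Fin a × Fin b) ℂ) :
    Matrix (Fin a × Fin a) (Fin b × Fin b) ℂ :=
  fun x y => ρ (x.1, y.1) (x.2, y.2)

/-- For the singular values `s` of the realignment `R_ρ` (not all zero),
`(∑ᵢ sᵢ²)³ ≤ (∑ᵢ sᵢ⁴)·(∑ᵢ sᵢ)²`, i.e. the r₄-negativity `C₄(ρ) = ½ ln(r₂³/r₄)`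
lower bounds the CCNR negativity `C(ρ) = ln ∑ᵢ sᵢ`. -/
theorem r4_negativity_le_CCNR_negativity {a b : ℕ}
    (ρ : Matrix (Fin a × Fin b) (Fin a × Fin b) ℂ)
    (hH : ((realign ρ)ᴴ * realign ρ).IsHermitian)
    (s : Fin b × Fin b → ℝ)
    (hs : ∀ i, s i = Real.sqrt (hH.eigenvalues i))
    (hnz : ∃ i, s i ≠ 0) :
    (∑ i, (s i) ^ 2) ^ 3 ≤ (∑ i, (s i) ^ 4) * (∑ i, s i) ^ 2 := by
  have hpos : ∀ i, 0 ≤ s i := fun i => (hs i) ▸ Real.sqrt_nonneg _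
  set A := ∑ i, s i with hA
  set B := ∑ i, (s i) ^ 2 with hB
  set C := ∑ i, (s i) ^ 3 with hC
  set D := ∑ i, (s i) ^ 4 with hD
  -- Cauchy–Schwarz: B² ≤ C·A
  have h1 : B ^ 2 ≤ C * A := by
    have h := Finset.sum_mul_sq_le_sq_mul_sq Finset.univ
      (fun i => Real.sqrt ((s i) ^ 3)) (fun i => Real.sqrt (s i))
    have e1 : ∀ i, Real.sqrt ((s i) ^ 3) * Real.sqrt (s i) = (s i) ^ 2 := by
      intro i
      rw [← Real.sqrt_mul (pow_nonneg (hpos i) 3), show (s i)^3 * s i = ((s i)^2)^2 by ring,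
        Real.sqrt_sq (sq_nonneg _)]
    have e2 : ∀ i, Real.sqrt ((s i) ^ 3) ^ 2 = (s i) ^ 3 := fun i =>
      Real.sq_sqrt (pow_nonneg (hpos i) 3)
    have e3 : ∀ i, Real.sqrt (s i) ^ 2 = s i := fun i => Real.sq_sqrt (hpos i)
    simpa [e1, e2, e3, hB, hC, hA] using h
  -- Cauchy–Schwarz: C² ≤ D·B
  have h2 : C ^ 2 ≤ D * B := by
    have h := Finset.sum_mul_sq_le_sq_mul_sq Finset.univ
      (fun i => (s i) ^ 2) (fun i => s i)
    have e1 : ∀ i, (s i) ^ 2 * s i = (s i) ^ 3 := fun i => by ring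
    have e2 : ∀ i, ((s i) ^ 2) ^ 2 = (s i) ^ 4 := fun i => by ring
    simpa [e1, e2, hB, hC, hD] using h
  have hBpos : 0 < B := by
    obtain ⟨i, hi⟩ := hnz
    have : 0 < (s i) ^ 2 := by positivity
    exact this.trans_le (Finset.single_le_sum (fun j _ => sq_nonneg (s j))
      (Finset.mem_univ i))
  have hAnn : 0 ≤ A := Finset.sum_nonneg (fun i _ => hpos i)
  have hCnn : 0 ≤ C := Finset.sum_nonneg (fun i _ => pow_nonneg (hpos i) 3)
  nlinarith [mul_le_mul h1 h1 (sq_nonneg B) (mul_nonneg hCnn hAnn),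
    mul_le_mul_of_nonneg_right h2 (sq_nonneg A), sq_nonneg A, hBpos]
end

section
/- Let r ≥ 2 and let λ : Fin r → ℝ be nonnegative, antitone, with ∑ i, λ i = 1 and λ 1 > 0 (the two largest Schmidt coefficients λ 0 ≥ λ 1 are positive). On ℂ^(Fin r × Fin r) define the pure state vector ψ (i,j) = if i = j then √(λ i) else 0, the density matrix ρ = ψ ψᴴ, and for 0 ≤ p ≤ 1 the depolarized state ρ' = (1−p)·ρ + (p/r²)·I. Then (ρ')^Γ is positive semidefinite if and only if p ≥ 1 − 1/(1 + r²·√(λ 0 · λ 1)). In other words, the globally depolarized pure state becomes PPT exactly at a noise threshold determined solely by the two largest Schmidt coefficients. -/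
open Matrix BigOperators ComplexOrder

/-- A globally depolarized pure state `ρ' = (1−p)|ψ⟩⟨ψ| + (p/r²)·I` with Schmidt
coefficients `λ` becomes PPT exactly at the noise threshold determined by the two
largest Schmidt coefficients: `(ρ')^Γ ⪰ 0 ↔ p ≥ 1 − 1/(1 + r²·√(λ₀ λ₁))`. -/
theorem depolarized_pure_state_PPT_threshold {r : ℕ} (hr : 2 ≤ r)
    (lam : Fin r → ℝ) (hnn : ∀ i, 0 ≤ lam i) (hanti : Antitone lam)
    (hsum : ∑ i, lam i = 1)
    (hlam1 : 0 < lam ⟨1, by omega⟩)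
    (ψ : Fin r × Fin r → ℂ)
    (hψ : ∀ x, ψ x = if x.1 = x.2 then ((Real.sqrt (lam x.1) : ℝ) : ℂ) else 0)
    (ρ : Matrix (Fin r × Fin r) (Fin r × Fin r) ℂ)
    (hρ : ∀ x y, ρ x y = ψ x * star (ψ y))
    (p : ℝ) (hp0 : 0 ≤ p) (hp1 : p ≤ 1)
    (ρ' : Matrix (Fin r × Fin r) (Fin r × Fin r) ℂ)
    (hρ' : ρ' = ((1 - p : ℝ) : ℂ) • ρ
        + ((p / ((r : ℝ) ^ 2) : ℝ) : ℂ) • (1 : Matrix (Fin r × Fin r) (Fin r × Fin r) ℂ)) :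
    (PT ρ').PosSemidef ↔
      1 - 1 / (1 + (r : ℝ) ^ 2 * Real.sqrt (lam ⟨0, by omega⟩ * lam ⟨1, by omega⟩)) ≤ p := by
  classical
  have hrpos : 0 < r := by omega
  have hr2 : (0:ℝ) < (r:ℝ)^2 := by positivity
  set i0 : Fin r := ⟨0, by omega⟩ with hi0def
  set i1 : Fin r := ⟨1, by omega⟩ with hi1def
  have hne01 : i0 ≠ i1 := by simp [hi0def, hi1def, Fin.ext_iff]
  have hlam0 : 0 < lam i0 := lt_of_lt_of_le hlam1 (hanti (by simp [hi0def, hi1def, Fin.le_def]))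
  set s : ℝ := Real.sqrt (lam i0 * lam i1) with hsdef
  have hs : 0 < s := Real.sqrt_pos.2 (mul_pos hlam0 hlam1)
  have hD : (0:ℝ) < 1 + (r:ℝ)^2 * s := by positivity
  -- real-valued ψ
  have hstarψ : ∀ x, (starRingEnd ℂ) (ψ x) = ψ x := by
    intro x; rw [hψ]; split <;> simp [Complex.conj_ofReal]
  -- entries of PT ρ'
  have hM : ∀ a b : Fin r × Fin r, PT ρ' a b
      = ((1 - p : ℝ) : ℂ) * (ψ (a.1, b.2) * ψ (b.1, a.2))
        + ((p / (r:ℝ)^2 : ℝ) : ℂ) * (if a = b then 1 else 0) := by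
    intro a b
    have h1 : ((a.1, b.2) = (b.1, a.2)) ↔ (a = b) := by
      simp only [Prod.mk.injEq, Prod.ext_iff]
      constructor <;> rintro ⟨h1, h2⟩ <;> exact ⟨h1, h2.symm⟩
    simp only [PT, hρ', Matrix.add_apply, Matrix.smul_apply, hρ, smul_eq_mul,
      Matrix.one_apply, RCLike.star_def, hstarψ]
    rw [if_congr h1 rfl rfl]
  have hHerm : (PT ρ').IsHermitian := by
    ext a b
    simp only [Matrix.conjTranspose_apply, hM, RCLike.star_def, map_add, _root_.map_mul,
      hstarψ, Complex.conj_ofReal, apply_ite (starRingEnd ℂ), _root_.map_one, map_zero]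
    rw [if_congr (eq_comm : (b = a) ↔ _) rfl rfl]
    ring
  have hquad : ∀ x : Fin r × Fin r → ℂ,
      star x ⬝ᵥ (PT ρ') *ᵥ x
        = ((p / (r:ℝ)^2 : ℝ) : ℂ) * (((∑ a, Complex.normSq (x a)) : ℝ) : ℂ)
          + ((1 - p : ℝ) : ℂ) * ∑ a : Fin r × Fin r,
              ((Real.sqrt (lam a.1) * Real.sqrt (lam a.2) : ℝ) : ℂ)
                * (starRingEnd ℂ) (x a) * x (a.2, a.1) := by
    intro x
    simp only [dotProduct, Matrix.mulVec, hM, Pi.star_apply, RCLike.star_def]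
    push_cast
    rw [Finset.mul_sum, Finset.mul_sum, ← Finset.sum_add_distrib]
    refine Finset.sum_congr rfl fun a _ => ?_
    have hinner : (∑ b : Fin r × Fin r,
          ((((1:ℝ) - p : ℝ) : ℂ) * (ψ (a.1, b.2) * ψ (b.1, a.2))
            + ((p / ((r:ℝ))^2 : ℝ) : ℂ) * if a = b then 1 else 0) * x b)
        = (((1:ℝ) - p : ℝ) : ℂ) * ((Real.sqrt (lam a.1) : ℂ) * (Real.sqrt (lam a.2) : ℂ)
              * x (a.2, a.1))
          + ((p / ((r:ℝ))^2 : ℝ) : ℂ) * x a := by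
      rw [Finset.sum_congr rfl (fun b _ => add_mul _ _ _), Finset.sum_add_distrib]
      congr 1
      · rw [Fintype.sum_prod_type]
        simp only [hψ]
        simp [mul_ite, ite_mul, zero_mul, mul_zero, Finset.sum_ite_eq, Finset.sum_ite_eq',
          mul_assoc]
      · simp [mul_ite, ite_mul, zero_mul, mul_zero, Finset.sum_ite_eq, Finset.sum_ite_eq']
    push_cast at hinner
    rw [hinner]
    have hns : ((Complex.normSq (x a) : ℝ) : ℂ) = (starRingEnd ℂ) (x a) * x a :=
      Complex.normSq_eq_conj_mul_self
    push_cast at hns ⊢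
    rw [hns]
    ring
  have hkey : ((1 - p) * s ≤ p / (r:ℝ)^2) ↔ (1 - 1 / (1 + (r:ℝ)^2 * s) ≤ p) := by
    rw [le_div_iff₀ hr2, sub_le_comm, le_div_iff₀ hD]
    constructor <;> intro h <;> nlinarith [h]
  rw [← hkey]
  have hsqrts : Real.sqrt (lam i0) * Real.sqrt (lam i1) = s := (Real.sqrt_mul (hnn i0) _).symm
  constructor
  · -- PSD → threshold
    rintro hpsd'
    obtain ⟨-, hpsd⟩ := Matrix.posSemidef_iff_dotProduct_mulVec.mp hpsd'
    set c1 : Fin r × Fin r := (i0, i1) with hc1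
    set c2 : Fin r × Fin r := (i1, i0) with hc2
    have h01 : c1 ≠ c2 := by
      intro h; exact hne01 (congrArg Prod.fst h)
    set x : Fin r × Fin r → ℂ := fun a =>
      if a = c1 then 1 else if a = c2 then -1 else 0 with hxdef
    have hxc1 : x c1 = 1 := by simp [hxdef]
    have hxc2 : x c2 = -1 := by simp [hxdef, h01.symm]
    have hx0 : ∀ a, a ∉ ({c1, c2} : Finset (Fin r × Fin r)) → x a = 0 := by
      intro a ha
      simp only [Finset.mem_insert, Finset.mem_singleton, not_or] at ha
      simp [hxdef, ha.1, ha.2]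
    have hQ := hpsd x
    rw [hquad x] at hQ
    have hN : (∑ a, Complex.normSq (x a)) = 2 := by
      rw [← Finset.sum_subset (Finset.subset_univ {c1, c2})
        (fun a _ ha => by rw [hx0 a ha]; simp)]
      rw [Finset.sum_pair h01, hxc1, hxc2]
      norm_num
    have hT : (∑ a : Fin r × Fin r,
          ((Real.sqrt (lam a.1) * Real.sqrt (lam a.2) : ℝ) : ℂ)
            * (starRingEnd ℂ) (x a) * x (a.2, a.1)) = -2 * (s : ℂ) := by
      rw [← Finset.sum_subset (Finset.subset_univ {c1, c2})
        (fun a _ ha => by rw [hx0 a ha]; simp)]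
      rw [Finset.sum_pair h01]
      have e1 : ((c1.2, c1.1) : Fin r × Fin r) = c2 := rfl
      have e2 : ((c2.2, c2.1) : Fin r × Fin r) = c1 := rfl
      rw [e1, e2, hxc1, hxc2]
      have f1 : (c1.1 : Fin r) = i0 := rfl
      have f2 : (c1.2 : Fin r) = i1 := rfl
      have f3 : (c2.1 : Fin r) = i1 := rfl
      have f4 : (c2.2 : Fin r) = i0 := rfl
      rw [f1, f2, f3, f4]
      simp only [_root_.map_one, map_neg, mul_one, mul_neg, one_mul, neg_neg]
      rw [mul_comm (Real.sqrt (lam i1)) (Real.sqrt (lam i0)), hsqrts]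
      push_cast
      ring
    rw [hN, hT] at hQ
    have : (0:ℂ) ≤ ((p / (r:ℝ)^2 * 2 - (1 - p) * (2 * s) : ℝ) : ℂ) := by
      convert hQ using 1
      push_cast
      ring
    rw [Complex.zero_le_real] at this
    linarith
  · -- threshold → PSD
    intro hth
    refine Matrix.posSemidef_iff_dotProduct_mulVec.mpr ⟨hHerm, fun x => ?_⟩
    rw [hquad x]
    set T : Fin r × Fin r → ℂ := fun a =>
      ((Real.sqrt (lam a.1) * Real.sqrt (lam a.2) : ℝ) : ℂ)
        * (starRingEnd ℂ) (x a) * x (a.2, a.1) with hTdef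
    set n : Fin r × Fin r → ℝ := fun a => Complex.normSq (x a) with hndef
    have hn0 : ∀ a, 0 ≤ n a := fun a => Complex.normSq_nonneg _
    have hTswap : ∀ a : Fin r × Fin r, T (a.2, a.1) = (starRingEnd ℂ) (T a) := by
      intro a
      simp only [hTdef, _root_.map_mul, Complex.conj_ofReal, Complex.conj_conj, Prod.mk.eta]
      push_cast
      ring
    -- imaginary part vanishes
    have hIm : (∑ a : Fin r × Fin r, T a).im = 0 := by
      rw [Complex.im_sum]
      have h1 : ∑ a : Fin r × Fin r, (T a).im
          = ∑ a : Fin r × Fin r, (T ((Equiv.prodComm (Fin r) (Fin r)) a)).im :=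
        (Equiv.sum_comp (Equiv.prodComm (Fin r) (Fin r)) (fun a => (T a).im)).symm
      have h2 : ∀ a : Fin r × Fin r, (T ((Equiv.prodComm (Fin r) (Fin r)) a)).im = -(T a).im := by
        intro a
        have : ((Equiv.prodComm (Fin r) (Fin r)) a) = (a.2, a.1) := rfl
        rw [this, hTswap a, Complex.conj_im]
      rw [Finset.sum_congr rfl (fun a _ => h2 a)] at h1
      rw [Finset.sum_neg_distrib] at h1
      linarith
    -- product bound for off-diagonal indices
    have hprod : ∀ i j : Fin r, i ≠ j → lam i * lam j ≤ lam i0 * lam i1 := by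
      intro i j hij
      by_cases hi : (i : ℕ) = 0
      · have hj : 1 ≤ (j : ℕ) := by
          rcases Nat.eq_zero_or_pos (j : ℕ) with h | h
          · exact absurd (Fin.ext (by omega : (i:ℕ) = (j:ℕ))) hij
          · omega
        have h1 : lam j ≤ lam i1 := hanti (by simp [hi1def, Fin.le_def, hj])
        have h2 : lam i ≤ lam i0 := hanti (by simp [hi0def, Fin.le_def])
        exact mul_le_mul h2 h1 (hnn j) (hnn i0)
      · have hi' : 1 ≤ (i : ℕ) := by omega
        have h1 : lam i ≤ lam i1 := hanti (by simp [hi1def, Fin.le_def, hi'])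
        have h2 : lam j ≤ lam i0 := hanti (by simp [hi0def, Fin.le_def])
        calc lam i * lam j ≤ lam i1 * lam i0 :=
              mul_le_mul h1 h2 (hnn j) (hnn i1)
          _ = lam i0 * lam i1 := mul_comm _ _
    -- real part bounds
    have hdiag : ∀ a : Fin r × Fin r, a.1 = a.2 → 0 ≤ (T a).re := by
      intro a ha
      have hσ : ((a.2, a.1) : Fin r × Fin r) = a := Prod.ext ha.symm ha
      have : T a = ((Real.sqrt (lam a.1) * Real.sqrt (lam a.2)
          * Complex.normSq (x a) : ℝ) : ℂ) := by
        simp only [hTdef, hσ, mul_assoc]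
        rw [← Complex.normSq_eq_conj_mul_self]
        push_cast
        ring
      rw [this, Complex.ofReal_re]
      have := Real.sqrt_nonneg (lam a.1)
      have := Real.sqrt_nonneg (lam a.2)
      have := Complex.normSq_nonneg (x a)
      positivity
    have hoff : ∀ a : Fin r × Fin r, a.1 ≠ a.2 →
        -(s / 2) * (n a + n (a.2, a.1)) ≤ (T a).re := by
      intro a ha
      set c : ℝ := Real.sqrt (lam a.1) * Real.sqrt (lam a.2) with hcdef
      have hc0 : 0 ≤ c := mul_nonneg (Real.sqrt_nonneg _) (Real.sqrt_nonneg _)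
      have hcs : c ≤ s := by
        rw [hcdef, ← Real.sqrt_mul (hnn a.1), hsdef]
        exact Real.sqrt_le_sqrt (hprod a.1 a.2 ha)
      have hre : (T a).re = c * ((starRingEnd ℂ) (x a) * x (a.2, a.1)).re := by
        rw [hTdef]
        simp only [mul_assoc]
        rw [Complex.re_ofReal_mul]
      have hz : -((n a + n (a.2, a.1)) / 2) ≤ ((starRingEnd ℂ) (x a) * x (a.2, a.1)).re := by
        simp only [hndef, Complex.mul_re, Complex.conj_re, Complex.conj_im,
          Complex.normSq_apply]
        nlinarith [sq_nonneg ((x a).re + (x (a.2, a.1)).re),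
          sq_nonneg ((x a).im + (x (a.2, a.1)).im)]
      rw [hre]
      have hnn' : 0 ≤ n a + n (a.2, a.1) := add_nonneg (hn0 _) (hn0 _)
      nlinarith [mul_le_mul_of_nonneg_left hz hc0]
    -- assemble the real estimate
    set S : Finset (Fin r × Fin r) := Finset.univ.filter (fun a => a.1 ≠ a.2) with hSdef
    have hmemS : ∀ a : Fin r × Fin r, a ∈ S ↔ a.1 ≠ a.2 := by
      intro a; simp [hSdef]
    have hreindex : ∑ a ∈ S, n (a.2, a.1) = ∑ a ∈ S, n a := by
      refine Finset.sum_nbij' (fun a => ((a.2, a.1) : Fin r × Fin r))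
        (fun a => ((a.2, a.1) : Fin r × Fin r)) ?_ ?_ ?_ ?_ ?_
      · intro a haS; rw [hmemS] at *; exact Ne.symm haS
      · intro a haS; rw [hmemS] at *; exact Ne.symm haS
      · intro a _; exact Prod.mk.eta
      · intro a _; exact Prod.mk.eta
      · intro a _; rfl
    have hCR : -(s) * ∑ a ∈ S, n a ≤ ∑ a : Fin r × Fin r, (T a).re := by
      rw [← Finset.sum_filter_add_sum_filter_not Finset.univ (fun a => a.1 ≠ a.2)
        (fun a => (T a).re), ← hSdef]
      have h1 : -(s) * ∑ a ∈ S, n a ≤ ∑ a ∈ S, (T a).re := by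
        calc -(s) * ∑ a ∈ S, n a
            = ∑ a ∈ S, (-(s / 2) * (n a + n (a.2, a.1))) := by
              rw [← Finset.mul_sum, Finset.sum_add_distrib, hreindex]
              ring
          _ ≤ ∑ a ∈ S, (T a).re :=
              Finset.sum_le_sum (fun a haS => hoff a ((hmemS a).mp haS))
      have h2 : (0:ℝ) ≤ ∑ a ∈ Finset.univ.filter (fun a : Fin r × Fin r => ¬ a.1 ≠ a.2),
          (T a).re :=
        Finset.sum_nonneg (fun a haS => hdiag a (by simpa using (Finset.mem_filter.mp haS).2))
      linarith
    have hNsplit : ∑ a ∈ S, n a ≤ ∑ a : Fin r × Fin r, n a :=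
      Finset.sum_le_sum_of_subset_of_nonneg (Finset.filter_subset _ _) (fun a _ _ => hn0 a)
    have hSnn : (0:ℝ) ≤ ∑ a ∈ S, n a := Finset.sum_nonneg (fun a _ => hn0 a)
    -- final complex inequality
    have hTsum : (∑ a : Fin r × Fin r, T a) = (((∑ a : Fin r × Fin r, (T a).re) : ℝ) : ℂ) := by
      apply Complex.ext
      · simp [Complex.re_sum]
      · simp [hIm]
    rw [hTsum]
    have : (0:ℝ) ≤ p / (r:ℝ)^2 * (∑ a, n a) + (1 - p) * ∑ a : Fin r × Fin r, (T a).re := by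
      have hpr : 0 ≤ p / (r:ℝ)^2 := div_nonneg hp0 (le_of_lt hr2)
      have h1p : 0 ≤ 1 - p := by linarith
      nlinarith [mul_le_mul_of_nonneg_left hCR h1p, mul_le_mul_of_nonneg_left hNsplit hpr,
        mul_le_mul_of_nonneg_right hth hSnn]
    calc (0:ℂ) = ((0:ℝ) : ℂ) := by norm_num
      _ ≤ _ := by
          rw [← Complex.ofReal_mul, ← Complex.ofReal_mul, ← Complex.ofReal_add]
          exact Complex.real_le_real.mpr (by simpa [hndef] using this)
end

section
/- Let λ : Fin r → ℝ be nonnegative, and on ℂ^(Fin r × Fin r) define ψ (i,j) = if i = j then √(λ i) else 0 and ρ = ψ ψᴴ. Then the multiset of eigenvalues (with multiplicity) of the Hermitian matrix ρ^Γ equals the multiset { λ i : i ∈ Fin r } ∪ { √(λ i · λ j) : i < j } ∪ { −√(λ i · λ j) : i < j }. That is, the negativity spectrum of a pure state with Schmidt coefficients λ_i consists of the λ_i together with ±√(λ_i λ_j) for i < j. -/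
open Matrix BigOperators

section NegAux

open Polynomial

lemma negaux_charpoly_conj {n : Type*} [Fintype n] [DecidableEq n]
    (U V D : Matrix n n ℂ) (hUV : U * V = 1) :
    (U * D * V).charpoly = D.charpoly := by
  unfold Matrix.charpoly
  have hs : (Matrix.scalar n (X : ℂ[X])) = (X : ℂ[X]) • (1 : Matrix n n ℂ[X]) := by
    ext i j; simp [Matrix.scalar_apply, Matrix.smul_apply, Matrix.one_apply, Matrix.diagonal_apply]
  have hm : ∀ M N : Matrix n n ℂ, (M * N).map (C : ℂ →+* ℂ[X]) = M.map C * N.map C := by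
    intro M N; exact Matrix.map_mul
  have h1 : charmatrix (U * D * V) = U.map C * charmatrix D * V.map C := by
    unfold charmatrix
    show Matrix.scalar n X - (U * D * V).map C = _
    rw [hm, hm, mul_sub, sub_mul]
    congr 1
    · rw [hs, mul_smul_comm, smul_mul_assoc, mul_one, ← hm, hUV]
      simp
  have hdet : (U.map C).det * (V.map C).det = 1 := by
    rw [← Matrix.det_mul, ← hm, hUV]
    simp
  rw [h1, Matrix.det_mul, Matrix.det_mul]
  show (U.map C).det * (charmatrix D).det * (V.map C).det = _
  rw [mul_comm ((U.map C).det), mul_assoc, hdet, mul_one]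

lemma negaux_charpoly_diagonal {n : Type*} [Fintype n] [DecidableEq n] (d : n → ℂ) :
    (Matrix.diagonal d).charpoly = ∏ i, (X - C (d i)) := by
  unfold Matrix.charpoly
  have : charmatrix (Matrix.diagonal d) = Matrix.diagonal (fun i => (X : ℂ[X]) - C (d i)) := by
    ext i j
    by_cases h : i = j
    · subst h; simp [charmatrix_apply_eq, Matrix.diagonal_apply]
    · simp [charmatrix_apply_ne _ _ _ h, Matrix.diagonal_apply, h]
  rw [this, Matrix.det_diagonal]

lemma negaux_roots_prod {ι : Type*} [Fintype ι] (f : ι → ℂ) :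
    (∏ i, (X - C (f i))).roots = Finset.univ.val.map f := by
  have := Polynomial.roots_multiset_prod_X_sub_C (Finset.univ.val.map f)
  rw [← this, Multiset.map_map]
  congr 1

lemma negaux_herm_roots {n : Type*} [Fintype n] [DecidableEq n] {A : Matrix n n ℂ}
    (hA : A.IsHermitian) :
    A.charpoly.roots = Finset.univ.val.map (fun i => (hA.eigenvalues i : ℂ)) := by
  have h := hA.spectral_theorem
  have hUV : (hA.eigenvectorUnitary : Matrix n n ℂ) *
      star (hA.eigenvectorUnitary : Matrix n n ℂ) = 1 :=
    (Matrix.mem_unitaryGroup_iff).mp hA.eigenvectorUnitary.2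
  rw [show A.charpoly = (Matrix.diagonal ((↑) ∘ hA.eigenvalues : n → ℂ)).charpoly from by
    conv_lhs => rw [h]
    exact negaux_charpoly_conj _ _ _ hUV]
  rw [negaux_charpoly_diagonal]
  exact negaux_roots_prod _

lemma negaux_sum_ite_mul_ite {ι : Type*} [Fintype ι] [DecidableEq ι] (x y : ι) (s t : ℂ) :
    ∑ p, (if p = x then s else 0) * (if p = y then t else 0) = if x = y then s * t else 0 := by
  rw [Finset.sum_eq_single x]
  · by_cases h : x = y <;> simp [h]
  · intro b _ hb; simp [hb]
  · simp

noncomputable def negaux_cc : ℂ := ((Real.sqrt 2)⁻¹ : ℝ)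

lemma negaux_cc_mul_cc : negaux_cc * negaux_cc = 2⁻¹ := by
  unfold negaux_cc
  rw [← Complex.ofReal_mul, ← Real.sqrt_inv, Real.mul_self_sqrt (by norm_num)]
  norm_num

noncomputable def negaux_aa {r : ℕ} (q : Fin r × Fin r) : ℂ :=
  if q.1 = q.2 then 1 else negaux_cc

noncomputable def negaux_bb {r : ℕ} (q : Fin r × Fin r) : ℂ :=
  if q.1 = q.2 then 0 else if q.1 < q.2 then negaux_cc else -negaux_cc

noncomputable def negaux_UU {r : ℕ} : Matrix (Fin r × Fin r) (Fin r × Fin r) ℂ :=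
  fun p q => (if p = q then negaux_aa q else 0) + (if p = q.swap then negaux_bb q else 0)

noncomputable def negaux_dd {r : ℕ} (lam : Fin r → ℝ) (q : Fin r × Fin r) : ℝ :=
  if q.2 < q.1 then -(Real.sqrt (lam q.1) * Real.sqrt (lam q.2))
  else Real.sqrt (lam q.1) * Real.sqrt (lam q.2)

lemma negaux_swap_eq_self_iff {r : ℕ} (q : Fin r × Fin r) : q.swap = q ↔ q.1 = q.2 := by
  rcases q with ⟨i, j⟩; simp [Prod.ext_iff, eq_comm, and_self_iff]

lemma negaux_UtU {r : ℕ} : (negaux_UU (r := r)).transpose * negaux_UU = 1 := by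
  ext q q'
  rw [Matrix.mul_apply]
  simp only [Matrix.transpose_apply, negaux_UU, add_mul, mul_add, Finset.sum_add_distrib,
    negaux_sum_ite_mul_ite]
  rw [Matrix.one_apply]
  by_cases h : q = q'
  · subst h
    by_cases hd : q.1 = q.2
    · have hsw : q.swap = q := (negaux_swap_eq_self_iff q).mpr hd
      simp [negaux_aa, negaux_bb, hd, hsw]
    · have hsw : ¬ (q.swap = q) := fun hh => hd ((negaux_swap_eq_self_iff q).mp hh)
      have hsw' : ¬ (q = q.swap) := fun hh => hsw hh.symm
      simp only [if_pos rfl, if_neg hsw, if_neg hsw', add_zero, zero_add]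
      by_cases hlt : q.1 < q.2 <;>
        simp [negaux_aa, negaux_bb, hd, hlt, neg_mul_neg, negaux_cc_mul_cc] <;> norm_num
  · rw [if_neg h]
    have h4 : ¬ (q.swap = q'.swap) := fun hh => h (Prod.swap_injective hh)
    by_cases hsw : q' = q.swap
    · subst hsw
      have h2 : q = q.swap.swap := by rw [Prod.swap_swap]
      have hd : ¬ (q.1 = q.2) := fun hd => h (((negaux_swap_eq_self_iff q).mpr hd).symm)
      have hd' : ¬ (q.2 = q.1) := fun e => hd e.symm
      simp only [if_neg h, if_neg h4, if_pos h2, if_pos rfl, add_zero, zero_add]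
      rcases lt_trichotomy q.1 q.2 with hlt | heq | hgt
      · have hngt : ¬ (q.2 < q.1) := asymm hlt
        simp [negaux_aa, negaux_bb, hd, hd', hlt, hngt]
      · exact absurd heq hd
      · have hnlt : ¬ (q.1 < q.2) := asymm hgt
        simp [negaux_aa, negaux_bb, hd, hd', hgt, hnlt]
    · have h2 : ¬ (q = q'.swap) := fun hh => hsw (by rw [hh, Prod.swap_swap])
      have h3 : ¬ (q.swap = q') := fun hh => hsw hh.symm
      simp [if_neg h2, if_neg h3, if_neg h4, h]

lemma negaux_A_mul_UU {r : ℕ} (lam : Fin r → ℝ)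
    (A : Matrix (Fin r × Fin r) (Fin r × Fin r) ℂ)
    (hA : ∀ p q, A p q =
      if q = p.swap then ((Real.sqrt (lam p.1) * Real.sqrt (lam p.2) : ℝ) : ℂ) else 0) :
    A * negaux_UU = negaux_UU * Matrix.diagonal (fun q => ((negaux_dd lam q : ℝ) : ℂ)) := by
  ext p q
  rw [Matrix.mul_apply, Matrix.mul_diagonal]
  have hsum : ∑ x, A p x * negaux_UU x q
      = ((Real.sqrt (lam p.1) * Real.sqrt (lam p.2) : ℝ) : ℂ) * negaux_UU p.swap q := by
    rw [Finset.sum_eq_single p.swap]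
    · rw [hA]; simp
    · intro b _ hb; rw [hA]; simp [hb]
    · simp
  rw [hsum]
  show _ = negaux_UU p q * ((negaux_dd lam q : ℝ) : ℂ)
  have swap_swap_eq : ∀ x y : Fin r × Fin r, (x.swap = y.swap) = (x = y) := by
    intro x y; simp [Prod.swap_injective.eq_iff]
  have swap_eq : ∀ x y : Fin r × Fin r, (x.swap = y) = (x = y.swap) := by
    intro x y
    apply propext; constructor
    · intro hh; rw [← hh, Prod.swap_swap]
    · intro hh; rw [hh, Prod.swap_swap]
  simp only [negaux_UU, swap_swap_eq, swap_eq]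
  by_cases hpq : p = q
  · subst hpq
    by_cases hd : p.1 = p.2
    · have hsw : p = p.swap := ((negaux_swap_eq_self_iff p).mpr hd).symm
      simp only [if_pos rfl, if_pos hsw.symm, ← hsw, if_pos rfl]
      have hdd : negaux_dd lam p = Real.sqrt (lam p.1) * Real.sqrt (lam p.2) := by
        unfold negaux_dd; rw [if_neg]; rw [← hd]; exact lt_irrefl _
      rw [hdd]; ring
    · have hsw : ¬ (p = p.swap) := fun hh => hd ((negaux_swap_eq_self_iff p).mp hh.symm)
      simp only [if_pos rfl, if_neg hsw, zero_add, add_zero]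
      unfold negaux_aa negaux_bb negaux_dd
      simp only [if_true, if_neg hd]
      rcases lt_trichotomy p.1 p.2 with hlt | heq | hgt
      · rw [if_pos hlt, if_neg (asymm hlt)]; push_cast; ring
      · exact absurd heq hd
      · rw [if_neg (asymm hgt), if_pos hgt]; push_cast; ring
  · by_cases hps : p = q.swap
    · subst hps
      have hqs : ¬ (q.swap = q) := fun hh => hpq hh
      have hd : ¬ (q.1 = q.2) := fun hh => hqs ((negaux_swap_eq_self_iff q).mpr hh)
      simp only [if_pos rfl, if_neg hqs, zero_add, add_zero]
      unfold negaux_aa negaux_bb negaux_dd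
      simp only [if_true, if_neg hd]
      rcases lt_trichotomy q.1 q.2 with hlt | heq | hgt
      · rw [if_pos hlt, if_neg (asymm hlt)]
        simp only [Prod.fst_swap, Prod.snd_swap]; push_cast; ring
      · exact absurd heq hd
      · rw [if_neg (asymm hgt), if_pos hgt]
        simp only [Prod.fst_swap, Prod.snd_swap]; push_cast; ring
    · simp [hpq, hps]

lemma negaux_multiset_dd {r : ℕ} (lam : Fin r → ℝ) (hnn : ∀ i, 0 ≤ lam i) :
    (Finset.univ.val.map (negaux_dd lam) : Multiset ℝ) =
      Finset.univ.val.map lam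
        + (Finset.univ.filter fun q : Fin r × Fin r => q.1 < q.2).val.map
            (fun q => Real.sqrt (lam q.1 * lam q.2))
        + (Finset.univ.filter fun q : Fin r × Fin r => q.1 < q.2).val.map
            (fun q => -Real.sqrt (lam q.1 * lam q.2)) := by
  rw [← Multiset.filter_add_not (fun q : Fin r × Fin r => q.1 = q.2) Finset.univ.val,
    Multiset.map_add]
  rw [← Multiset.filter_add_not (fun q : Fin r × Fin r => q.1 < q.2)
    (Multiset.filter (fun q : Fin r × Fin r => ¬ q.1 = q.2) Finset.univ.val),
    Multiset.map_add]
  have part1 : (Multiset.filter (fun q : Fin r × Fin r => q.1 = q.2) Finset.univ.val).map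
      (negaux_dd lam) = Finset.univ.val.map lam := by
    have hset : Finset.univ.filter (fun q : Fin r × Fin r => q.1 = q.2)
        = Finset.univ.map ⟨fun i : Fin r => (i, i), by intro a b h; simpa [Prod.ext_iff] using h⟩ := by
      ext ⟨a, b⟩
      simp only [Finset.mem_filter, Finset.mem_univ, true_and, Finset.mem_map,
        Function.Embedding.coeFn_mk, Prod.ext_iff]
      constructor
      · rintro h; exact ⟨a, ⟨rfl, h⟩⟩
      · rintro ⟨i, hi1, hi2⟩; rw [← hi1, ← hi2]; rfl
    rw [← Finset.filter_val, hset, Finset.map_val, Multiset.map_map]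
    apply Multiset.map_congr rfl
    intro i _
    simp only [Function.comp_apply, Function.Embedding.coeFn_mk, negaux_dd]
    change (if i < i then -(Real.sqrt (lam i) * Real.sqrt (lam i))
      else Real.sqrt (lam i) * Real.sqrt (lam i)) = lam i
    rw [if_neg (lt_irrefl _), Real.mul_self_sqrt (hnn i)]
  have part2 : (Multiset.filter (fun q : Fin r × Fin r => q.1 < q.2)
      (Multiset.filter (fun q : Fin r × Fin r => ¬ q.1 = q.2) Finset.univ.val)).map
        (negaux_dd lam)
      = (Finset.univ.filter fun q : Fin r × Fin r => q.1 < q.2).val.map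
          (fun q => Real.sqrt (lam q.1 * lam q.2)) := by
    rw [Multiset.filter_filter]
    have hpred : Multiset.filter (fun q : Fin r × Fin r => q.1 < q.2 ∧ ¬ q.1 = q.2)
        Finset.univ.val = (Finset.univ.filter fun q : Fin r × Fin r => q.1 < q.2).val := by
      rw [← Finset.filter_val]
      apply Multiset.filter_congr
      intro q _
      constructor
      · rintro ⟨h, _⟩; exact h
      · intro h; exact ⟨h, ne_of_lt h⟩
    rw [hpred]
    apply Multiset.map_congr rfl
    intro q hq
    have hlt : q.1 < q.2 := (Finset.mem_filter.mp hq).2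
    simp only [negaux_dd]
    rw [if_neg (asymm hlt), Real.sqrt_mul (hnn q.1)]
  have part3 : (Multiset.filter (fun q : Fin r × Fin r => ¬ q.1 < q.2)
      (Multiset.filter (fun q : Fin r × Fin r => ¬ q.1 = q.2) Finset.univ.val)).map
        (negaux_dd lam)
      = (Finset.univ.filter fun q : Fin r × Fin r => q.1 < q.2).val.map
          (fun q => -Real.sqrt (lam q.1 * lam q.2)) := by
    rw [Multiset.filter_filter]
    have hpred : Multiset.filter (fun q : Fin r × Fin r => ¬ q.1 < q.2 ∧ ¬ q.1 = q.2)
        Finset.univ.val = (Finset.univ.filter fun q : Fin r × Fin r => q.2 < q.1).val := by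
      rw [← Finset.filter_val]
      apply Multiset.filter_congr
      intro q _
      constructor
      · rintro ⟨h1, h2⟩
        rcases lt_trichotomy q.1 q.2 with h | h | h
        · exact absurd h h1
        · exact absurd h h2
        · exact h
      · intro h; exact ⟨asymm h, fun e => absurd e (ne_of_gt h)⟩
    rw [hpred]
    have hset : Finset.univ.filter (fun q : Fin r × Fin r => q.2 < q.1)
        = (Finset.univ.filter fun q : Fin r × Fin r => q.1 < q.2).map
            ⟨Prod.swap, Prod.swap_injective⟩ := by
      ext ⟨a, b⟩
      simp only [Finset.mem_filter, Finset.mem_univ, true_and, Finset.mem_map,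
        Function.Embedding.coeFn_mk, Prod.swap_eq_iff_eq_swap]
      constructor
      · intro h; exact ⟨(b, a), h, rfl⟩
      · rintro ⟨⟨x, y⟩, hxy, hs⟩
        obtain ⟨h1, h2⟩ : b = x ∧ a = y := by simpa [Prod.ext_iff, eq_comm] using hs
        rw [h1, h2]; exact hxy
    rw [hset, Finset.map_val, Multiset.map_map]
    apply Multiset.map_congr rfl
    intro q hq
    have hlt : q.1 < q.2 := (Finset.mem_filter.mp hq).2
    simp only [Function.comp_apply, Function.Embedding.coeFn_mk, negaux_dd, Prod.fst_swap,
      Prod.snd_swap]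
    rw [if_pos hlt, Real.sqrt_mul (hnn q.1), mul_comm]
  rw [part1, part2, part3, add_assoc]

end NegAux

/-- The negativity spectrum of a pure state with Schmidt coefficients `λ`: the
multiset of eigenvalues (with multiplicity) of `ρ^Γ` for `ρ = ψψᴴ`,
`ψ = ∑ᵢ √(λᵢ) eᵢ ⊗ eᵢ`, equals `{λᵢ} ∪ {√(λᵢλⱼ) : i < j} ∪ {−√(λᵢλⱼ) : i < j}`. -/
theorem pure_state_negativity_spectrum {r : ℕ}
    (lam : Fin r → ℝ) (hnn : ∀ i, 0 ≤ lam i)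
    (ψ : Fin r × Fin r → ℂ)
    (hψ : ∀ x, ψ x = if x.1 = x.2 then ((Real.sqrt (lam x.1) : ℝ) : ℂ) else 0)
    (ρ : Matrix (Fin r × Fin r) (Fin r × Fin r) ℂ)
    (hρ : ∀ x y, ρ x y = ψ x * star (ψ y))
    (hΓ : (PT ρ).IsHermitian) :
    Finset.univ.val.map hΓ.eigenvalues =
      Finset.univ.val.map lam
        + (Finset.univ.filter fun q : Fin r × Fin r => q.1 < q.2).val.map
            (fun q => Real.sqrt (lam q.1 * lam q.2))
        + (Finset.univ.filter fun q : Fin r × Fin r => q.1 < q.2).val.map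
            (fun q => -Real.sqrt (lam q.1 * lam q.2)) := by
  classical
  -- entries of the partial transpose
  have hA : ∀ p q : Fin r × Fin r, PT ρ p q =
      if q = p.swap then ((Real.sqrt (lam p.1) * Real.sqrt (lam p.2) : ℝ) : ℂ) else 0 := by
    rintro ⟨i, j⟩ ⟨k, l⟩
    show ρ (i, l) (k, j) = _
    rw [hρ, hψ, hψ]
    have hcond : ((k, l) = (i, j).swap) = (k = j ∧ l = i) := by simp [Prod.ext_iff]
    simp only [hcond]
    by_cases h1 : i = l <;> by_cases h2 : k = j
    · subst h1; subst h2
      rw [if_pos rfl, if_pos rfl, if_pos ⟨rfl, rfl⟩, Complex.star_def, Complex.conj_ofReal]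
      push_cast; ring
    · rw [if_neg h2]; simp [h2]
    · rw [if_neg h1]; simp [show ¬ l = i from fun e => h1 e.symm]
    · rw [if_neg h1]; simp [show ¬ l = i from fun e => h1 e.symm]
  -- diagonalization
  have hVU := negaux_UtU (r := r)
  have hUV : negaux_UU (r := r) * (negaux_UU (r := r)).transpose = 1 :=
    mul_eq_one_comm.mp hVU
  have hAU := negaux_A_mul_UU lam (PT ρ) hA
  have hAeq : PT ρ = negaux_UU * Matrix.diagonal (fun q => ((negaux_dd lam q : ℝ) : ℂ))
      * (negaux_UU (r := r)).transpose := by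
    calc PT ρ = PT ρ * (negaux_UU * (negaux_UU (r := r)).transpose) := by rw [hUV, mul_one]
    _ = (PT ρ * negaux_UU) * (negaux_UU (r := r)).transpose := by rw [mul_assoc]
    _ = _ := by rw [hAU]
  have h2 : (PT ρ).charpoly.roots
      = Finset.univ.val.map (fun q => ((negaux_dd lam q : ℝ) : ℂ)) := by
    rw [show (PT ρ).charpoly
        = (Matrix.diagonal (fun q => ((negaux_dd lam q : ℝ) : ℂ))).charpoly from by
      conv_lhs => rw [hAeq]
      exact negaux_charpoly_conj _ _ _ hUV]
    rw [negaux_charpoly_diagonal]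
    exact negaux_roots_prod _
  have h1 := negaux_herm_roots hΓ
  have hmain : Finset.univ.val.map hΓ.eigenvalues = Finset.univ.val.map (negaux_dd lam) := by
    apply Multiset.map_injective Complex.ofReal_injective
    rw [Multiset.map_map, Multiset.map_map]
    exact h1.symm.trans h2
  rw [hmain]
  exact negaux_multiset_dd lam hnn
end
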